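/- Satisfiability and subsumption of SI-concepts are decidable: over a fixed countable effectively encoded signature, there is a computable function that, given an SI-concept D, returns true if and only if D is satisfiable (and hence also a computable function deciding whether one SI-concept subsumes another). -/

import Mathlib

/-- SHIQ-roles: role names (indexed by ℕ) and their inverses. -/
inductive Role where
  | atom : ℕ → Role
  | inv  : ℕ → Role
deriving DecidableEq

/-- The function `Inv` on roles: `Inv(R) = R⁻`, `Inv(R⁻) = R`. -/
def Role.Inv : Role → Role
  | .atom r => .inv r
  | .inv r  => .atom r

/-- The underlying role name of a (possibly inverse) role. -/
def Role.name : Role → ℕ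
  | .atom r => r
  | .inv r  => r

/-- Concepts of the SHIQ family (with ⊤ and ⊥ for convenience). -/
inductive DLConcept where
  | top : DLConcept
  | bot : DLConcept
  | atom : ℕ → DLConcept
  | neg : DLConcept → DLConcept
  | and : DLConcept → DLConcept → DLConcept
  | or : DLConcept → DLConcept → DLConcept
  | all : Role → DLConcept → DLConcept
  | ex : Role → DLConcept → DLConcept
  | atleast : ℕ → Role → DLConcept → DLConcept
  | atmost : ℕ → Role → DLConcept → DLConcept
deriving DecidableEq

/-- An interpretation: a (nonempty) domain, a valuation of concept names and
    of role names. -/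
structure Interp where
  Dom : Type
  dom_nonempty : Nonempty Dom
  cI : ℕ → Set Dom
  rI : ℕ → Dom → Dom → Prop

/-- Semantics of (possibly inverse) roles. -/
def Interp.rSem (I : Interp) : Role → I.Dom → I.Dom → Prop
  | .atom r => I.rI r
  | .inv r  => fun x y => I.rI r y x

/-- Semantics of concepts; number restrictions are interpreted by counting
    role successors (via cardinalities, so that infinite sets are handled
    correctly). -/
def Interp.cSem (I : Interp) : DLConcept → Set I.Dom
  | .top => Set.univ
  | .bot => ∅
  | .atom a => I.cI a
  | .neg C => (I.cSem C)ᶜ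
  | .and C D => I.cSem C ∩ I.cSem D
  | .or C D => I.cSem C ∪ I.cSem D
  | .all R C => {x | ∀ y, I.rSem R x y → y ∈ I.cSem C}
  | .ex R C => {x | ∃ y, I.rSem R x y ∧ y ∈ I.cSem C}
  | .atleast n R C => {x | (n : Cardinal) ≤ Cardinal.mk {y // I.rSem R x y ∧ y ∈ I.cSem C}}
  | .atmost n R C => {x | Cardinal.mk {y // I.rSem R x y ∧ y ∈ I.cSem C} ≤ (n : Cardinal)}

/-- `I.Good Rp`: the interpretation interprets every transitive role name
    (member of `Rp`) by a transitive relation. -/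
def Interp.Good (I : Interp) (Rp : Set ℕ) : Prop :=
  ∀ r ∈ Rp, Transitive (I.rI r)

/-- The role hierarchy ⊑* generated by a finite set of role inclusion axioms:
    inverses are added and the transitive-reflexive closure is taken. -/
def SubRole (RIA : List (Role × Role)) : Role → Role → Prop :=
  Relation.ReflTransGen (fun R S => (R, S) ∈ RIA ∨ (R.Inv, S.Inv) ∈ RIA)

/-- `I ⊨ R⁺`: the interpretation satisfies the role hierarchy. -/
def Interp.ModelsRH (I : Interp) (RIA : List (Role × Role)) : Prop :=
  ∀ R S, SubRole RIA R S → ∀ x y, I.rSem R x y → I.rSem S x y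

/-- `Trans(R)`: a (possibly inverse) role is transitive iff its name is in `Rp`. -/
def RTrans (Rp : Set ℕ) : Role → Prop
  | .atom r => r ∈ Rp
  | .inv r  => r ∈ Rp

/-- A role is simple iff it is neither transitive nor has a transitive sub-role. -/
def SimpleRole (Rp : Set ℕ) (RIA : List (Role × Role)) (R : Role) : Prop :=
  ∀ S, SubRole RIA S R → ¬ RTrans Rp S

/-- SHIQ-concepts: number restrictions occur only on simple roles. -/
def DLConcept.IsSHIQ (Rp : Set ℕ) (RIA : List (Role × Role)) : DLConcept → Prop
  | .top | .bot | .atom _ => True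
  | .neg C => C.IsSHIQ Rp RIA
  | .and C D | .or C D => C.IsSHIQ Rp RIA ∧ D.IsSHIQ Rp RIA
  | .all _ C | .ex _ C => C.IsSHIQ Rp RIA
  | .atleast _ R C | .atmost _ R C => SimpleRole Rp RIA R ∧ C.IsSHIQ Rp RIA

/-- Satisfiability of a concept w.r.t. a role hierarchy. -/
def Satisfiable (Rp : Set ℕ) (RIA : List (Role × Role)) (C : DLConcept) : Prop :=
  ∃ I : Interp, I.Good Rp ∧ I.ModelsRH RIA ∧ (I.cSem C).Nonempty

/-- Subsumption of concepts w.r.t. a role hierarchy. -/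
def Subsumes (Rp : Set ℕ) (RIA : List (Role × Role)) (C D : DLConcept) : Prop :=
  ∀ I : Interp, I.Good Rp → I.ModelsRH RIA → I.cSem C ⊆ I.cSem D

/-- SI-concepts: no number restrictions. -/
def DLConcept.IsSI : DLConcept → Prop
  | .top | .bot | .atom _ => True
  | .neg C => C.IsSI
  | .and C D | .or C D => C.IsSI ∧ D.IsSI
  | .all _ C | .ex _ C => C.IsSI
  | .atleast _ _ _ | .atmost _ _ _ => False

/-- Satisfiability of an SI-concept (no role hierarchy). -/
def SatisfiableSI (Rp : Set ℕ) (C : DLConcept) : Prop :=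
  ∃ I : Interp, I.Good Rp ∧ (I.cSem C).Nonempty

/-- Subsumption of SI-concepts (no role hierarchy). -/
def SubsumesSI (Rp : Set ℕ) (C D : DLConcept) : Prop :=
  ∀ I : Interp, I.Good Rp → I.cSem C ⊆ I.cSem D

/-- An effective encoding of roles. -/
def Role.code : Role → ℕ
  | .atom n => 2 * n
  | .inv n => 2 * n + 1

/-- An effective encoding of concepts. -/
def DLConcept.code : DLConcept → ℕ
  | .top => Nat.pair 0 0
  | .bot => Nat.pair 1 0
  | .atom a => Nat.pair 2 a
  | .neg C => Nat.pair 3 C.code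
  | .and C D => Nat.pair 4 (Nat.pair C.code D.code)
  | .or C D => Nat.pair 5 (Nat.pair C.code D.code)
  | .all R C => Nat.pair 6 (Nat.pair R.code C.code)
  | .ex R C => Nat.pair 7 (Nat.pair R.code C.code)
  | .atleast n R C => Nat.pair 8 (Nat.pair n (Nat.pair R.code C.code))
  | .atmost n R C => Nat.pair 9 (Nat.pair n (Nat.pair R.code C.code))

/-- An effective encoding of lists of naturals. -/
def natListCode : List ℕ → ℕ
  | [] => 0
  | a :: l => Nat.pair a (natListCode l) + 1

/-- An effective encoding of finite sets of role inclusion axioms. -/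
def riaCode (RIA : List (Role × Role)) : ℕ :=
  natListCode (RIA.map fun p => Nat.pair p.1.code p.2.code)

/-- The fixed set of transitive role names: the even role names (so that both the
transitive role names and the other role names form countably infinite,
effectively decidable sets). -/
def evenRp : Set ℕ := {n | n % 2 = 0}


/-! ### Part A: concept-level type-elimination algorithm -/

namespace SIDec

/-- The list of subconcepts of a concept. -/
def subc : DLConcept → List DLConcept
  | .top => [.top]
  | .bot => [.bot]
  | .atom a => [.atom a]
  | .neg C => .neg C :: subc C
  | .and C D => .and C D :: (subc C ++ subc D)
  | .or C D => .or C D :: (subc C ++ subc D)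
  | .all R C => .all R C :: subc C
  | .ex R C => .ex R C :: subc C
  | .atleast n R C => .atleast n R C :: subc C
  | .atmost n R C => .atmost n R C :: subc C

theorem mem_subc_self (D : DLConcept) : D ∈ subc D := by
  cases D <;> simp [subc]

theorem subc_trans : ∀ D X : DLConcept, X ∈ subc D → subc X ⊆ subc D := by
  intro D
  induction D with
  | top => intro X hX; simp [subc] at hX; subst hX; simp [subc]
  | bot => intro X hX; simp [subc] at hX; subst hX; simp [subc]
  | atom a => intro X hX; simp [subc] at hX; subst hX; simp [subc]
  | neg C ih =>
      intro X hX
      rcases List.mem_cons.1 hX with h | h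
      · subst h; exact fun Y hY => hY
      · exact fun Y hY => List.mem_cons_of_mem _ (ih X h hY)
  | and C D ihC ihD =>
      intro X hX
      rcases List.mem_cons.1 hX with h | h
      · subst h; exact fun Y hY => hY
      · rcases List.mem_append.1 h with h | h
        · exact fun Y hY => List.mem_cons_of_mem _ (List.mem_append.2 (Or.inl (ihC X h hY)))
        · exact fun Y hY => List.mem_cons_of_mem _ (List.mem_append.2 (Or.inr (ihD X h hY)))
  | or C D ihC ihD =>
      intro X hX
      rcases List.mem_cons.1 hX with h | h
      · subst h; exact fun Y hY => hY
      · rcases List.mem_append.1 h with h | h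
        · exact fun Y hY => List.mem_cons_of_mem _ (List.mem_append.2 (Or.inl (ihC X h hY)))
        · exact fun Y hY => List.mem_cons_of_mem _ (List.mem_append.2 (Or.inr (ihD X h hY)))
  | all R C ih =>
      intro X hX
      rcases List.mem_cons.1 hX with h | h
      · subst h; exact fun Y hY => hY
      · exact fun Y hY => List.mem_cons_of_mem _ (ih X h hY)
  | ex R C ih =>
      intro X hX
      rcases List.mem_cons.1 hX with h | h
      · subst h; exact fun Y hY => hY
      · exact fun Y hY => List.mem_cons_of_mem _ (ih X h hY)
  | atleast n R C ih =>
      intro X hX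
      rcases List.mem_cons.1 hX with h | h
      · subst h; exact fun Y hY => hY
      · exact fun Y hY => List.mem_cons_of_mem _ (ih X h hY)
  | atmost n R C ih =>
      intro X hX
      rcases List.mem_cons.1 hX with h | h
      · subst h; exact fun Y hY => hY
      · exact fun Y hY => List.mem_cons_of_mem _ (ih X h hY)

theorem subc_isSI : ∀ D : DLConcept, D.IsSI → ∀ X ∈ subc D, X.IsSI := by
  intro D
  induction D with
  | top => intro h X hX; simp [subc] at hX; subst hX; trivial
  | bot => intro h X hX; simp [subc] at hX; subst hX; trivial
  | atom a => intro h X hX; simp [subc] at hX; subst hX; trivial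
  | neg C ih =>
      intro h X hX
      rcases List.mem_cons.1 hX with h' | h'
      · subst h'; exact h
      · exact ih h X h'
  | and C D ihC ihD =>
      intro h X hX
      rcases List.mem_cons.1 hX with h' | h'
      · subst h'; exact h
      · rcases List.mem_append.1 h' with h' | h'
        · exact ihC h.1 X h'
        · exact ihD h.2 X h'
  | or C D ihC ihD =>
      intro h X hX
      rcases List.mem_cons.1 hX with h' | h'
      · subst h'; exact h
      · rcases List.mem_append.1 h' with h' | h'
        · exact ihC h.1 X h'
        · exact ihD h.2 X h'
  | all R C ih =>
      intro h X hX
      rcases List.mem_cons.1 hX with h' | h'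
      · subst h'; exact h
      · exact ih h X h'
  | ex R C ih =>
      intro h X hX
      rcases List.mem_cons.1 hX with h' | h'
      · subst h'; exact h
      · exact ih h X h'
  | atleast n R C ih => intro h; exact absurd h id
  | atmost n R C ih => intro h; exact absurd h id

/-- Local Hintikka condition. -/
def HinLoc (T : List DLConcept) : DLConcept → Prop
  | .top => DLConcept.top ∈ T
  | .bot => DLConcept.bot ∉ T
  | .neg C => (DLConcept.neg C ∈ T ↔ C ∉ T)
  | .and C D => (DLConcept.and C D ∈ T ↔ C ∈ T ∧ D ∈ T)
  | .or C D => (DLConcept.or C D ∈ T ↔ C ∈ T ∨ D ∈ T)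
  | _ => True

/-- Hintikka set over the closure `L`. -/
def Hin (L T : List DLConcept) : Prop :=
  (∀ X ∈ T, X ∈ L) ∧ (∀ X ∈ L, HinLoc T X)

/-- Edge condition between two types, for role name `r` (transitive iff `r` even). -/
def Edge (L T T' : List DLConcept) (r : ℕ) : Prop :=
  (∀ C : DLConcept, .all (.atom r) C ∈ T →
      C ∈ T' ∧ (r % 2 = 0 → DLConcept.all (.atom r) C ∈ T')) ∧
  (∀ C : DLConcept, .all (.inv r) C ∈ T' →
      C ∈ T ∧ (r % 2 = 0 → DLConcept.all (.inv r) C ∈ T)) ∧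
  (∀ C : DLConcept, .ex (.atom r) C ∈ L → DLConcept.ex (.atom r) C ∉ T →
      C ∉ T' ∧ (r % 2 = 0 → DLConcept.ex (.atom r) C ∉ T')) ∧
  (∀ C : DLConcept, .ex (.inv r) C ∈ L → DLConcept.ex (.inv r) C ∉ T' →
      C ∉ T ∧ (r % 2 = 0 → DLConcept.ex (.inv r) C ∉ T))

/-- Local goodness condition (existential demands are met within `S`). -/
def GoodLoc (L : List DLConcept) (S : List (List DLConcept)) (T : List DLConcept) :
    DLConcept → Prop
  | .ex (.atom r) C => DLConcept.ex (.atom r) C ∈ T → ∃ T' ∈ S, Edge L T T' r ∧ C ∈ T'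
  | .ex (.inv r) C => DLConcept.ex (.inv r) C ∈ T → ∃ T' ∈ S, Edge L T' T r ∧ C ∈ T'
  | .all (.atom r) C => DLConcept.all (.atom r) C ∉ T → ∃ T' ∈ S, Edge L T T' r ∧ C ∉ T'
  | .all (.inv r) C => DLConcept.all (.inv r) C ∉ T → ∃ T' ∈ S, Edge L T' T r ∧ C ∉ T'
  | _ => True

def Good (L : List DLConcept) (S : List (List DLConcept)) (T : List DLConcept) : Prop :=
  ∀ X ∈ L, GoodLoc L S T X

open Classical in
/-- One elimination step. -/
noncomputable def step (L : List DLConcept) (S : List (List DLConcept)) :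
    List (List DLConcept) :=
  S.filter fun T => decide (Good L S T)

/-- The concept-level sublists function (mirrors the code-level one). -/
def sublC : List DLConcept → List (List DLConcept)
  | [] => [[]]
  | a :: l => sublC l ++ (sublC l).map (a :: ·)

open Classical in
/-- Initial collection of candidate types. -/
noncomputable def S0 (L : List DLConcept) : List (List DLConcept) :=
  (sublC L).filter fun T => decide (Hin L T)

/-- The surviving types. -/
noncomputable def FP (L : List DLConcept) : List (List DLConcept) :=
  (step L)^[(S0 L).length] (S0 L)

end SIDec

namespace SIDec

theorem step_sublist (L : List DLConcept) (S : List (List DLConcept)) :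
    (step L S).Sublist S := List.filter_sublist

theorem iterate_sublist (L : List DLConcept) (S : List (List DLConcept)) (k : ℕ) :
    ((step L)^[k] S).Sublist S := by
  induction k with
  | zero => simp
  | succ k ih =>
      rw [Function.iterate_succ_apply']
      exact (step_sublist L _).trans ih

theorem step_fix (L : List DLConcept) : step L (FP L) = FP L := by
  classical
  have key : ∀ k : ℕ, (step L)^[k + 1] (S0 L) = (step L)^[k] (S0 L) ∨
      ((step L)^[k] (S0 L)).length + k ≤ (S0 L).length := by
    intro k
    induction k with
    | zero => right; simp
    | succ k ih =>
        rcases ih with h | h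
        · left
          rw [Function.iterate_succ_apply' (n := k + 1), h, ← Function.iterate_succ_apply' (step L) k (S0 L)]
          exact h
        · by_cases he : (step L)^[k + 1] (S0 L) = (step L)^[k] (S0 L)
          · left
            rw [Function.iterate_succ_apply' (n := k + 1), he, ← Function.iterate_succ_apply' (step L) k (S0 L)]
            exact he
          · right
            have hsub : ((step L)^[k + 1] (S0 L)).Sublist ((step L)^[k] (S0 L)) := by
              rw [Function.iterate_succ_apply']
              exact step_sublist L _
            have hlt : ((step L)^[k + 1] (S0 L)).length < ((step L)^[k] (S0 L)).length := by
              rcases Nat.lt_or_ge ((step L)^[k+1] (S0 L)).length ((step L)^[k] (S0 L)).length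
                with h' | h'
              · exact h'
              · exact absurd (hsub.eq_of_length (le_antisymm hsub.length_le h')) he
            omega
  rcases key (S0 L).length with h | h
  · rw [FP, ← Function.iterate_succ_apply' (step L) (S0 L).length (S0 L)]
    exact h
  · have : ((step L)^[(S0 L).length] (S0 L)).length = 0 := by omega
    have hnil : (step L)^[(S0 L).length] (S0 L) = [] := List.length_eq_zero_iff.1 this
    rw [FP, hnil]
    rfl

theorem mem_sublC_subset : ∀ (L T : List DLConcept), T ∈ sublC L → ∀ X ∈ T, X ∈ L := by
  intro L
  induction L with
  | nil => intro T hT; simp [sublC] at hT; subst hT; simp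
  | cons a l ih =>
      intro T hT X hX
      rcases List.mem_append.1 hT with h | h
      · exact List.mem_cons_of_mem _ (ih T h X hX)
      · rcases List.mem_map.1 h with ⟨T', hT', rfl⟩
        rcases List.mem_cons.1 hX with h' | h'
        · simp [h']
        · exact List.mem_cons_of_mem _ (ih T' hT' X h')

theorem filter_mem_sublC (p : DLConcept → Bool) : ∀ L : List DLConcept, L.filter p ∈ sublC L := by
  intro L
  induction L with
  | nil => simp [sublC]
  | cons a l ih =>
      by_cases h : p a
      · simp only [sublC, List.filter_cons, h, if_pos]
        exact List.mem_append.2 (Or.inr (List.mem_map.2 ⟨l.filter p, ih, rfl⟩))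
      · simp only [List.filter_cons, if_neg h]
        exact List.mem_append.2 (Or.inl ih)

open Classical in
theorem mem_FP_hin (L : List DLConcept) (T : List DLConcept) (hT : T ∈ FP L) :
    Hin L T ∧ T ∈ sublC L := by
  classical
  have h0 : T ∈ S0 L := (iterate_sublist L (S0 L) _).mem hT
  rw [S0, List.mem_filter] at h0
  exact ⟨by simpa using h0.2, h0.1⟩

open Classical in
theorem mem_FP_good (L : List DLConcept) (T : List DLConcept) (hT : T ∈ FP L) :
    Good L (FP L) T := by
  classical
  have := step_fix L
  rw [← this] at hT
  rw [step, List.mem_filter] at hT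
  simpa using hT.2

end SIDec

namespace SIDec

/-- Edge relation on surviving types. -/
def ERel (L : List DLConcept) (F : List (List DLConcept)) (r : ℕ)
    (T T' : {T : List DLConcept // T ∈ F}) : Prop :=
  Edge L T.val T'.val r

/-- The canonical model built from the surviving types. -/
noncomputable def Mod (L : List DLConcept) (F : List (List DLConcept))
    (T0 : List DLConcept) (hT0 : T0 ∈ F) : Interp where
  Dom := {T : List DLConcept // T ∈ F}
  dom_nonempty := ⟨⟨T0, hT0⟩⟩
  cI a := {T | DLConcept.atom a ∈ T.val}
  rI r := if r % 2 = 0 then Relation.TransGen (ERel L F r) else ERel L F r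

theorem mod_good (L : List DLConcept) (F : List (List DLConcept)) (T0 : List DLConcept)
    (hT0 : T0 ∈ F) : (Mod L F T0 hT0).Good evenRp := by
  intro r hr
  have hr' : r % 2 = 0 := hr
  show Transitive ((Mod L F T0 hT0).rI r)
  simp only [Mod, if_pos hr']
  exact fun _ _ _ h h' => h.trans h'

section Prop_lemmas

variable {L : List DLConcept} {F : List (List DLConcept)} {r : ℕ}

theorem prop1 {T T' : {T : List DLConcept // T ∈ F}}
    (h : Relation.TransGen (ERel L F r) T T') (hr : r % 2 = 0) (C : DLConcept)
    (hC : DLConcept.all (.atom r) C ∈ T.val) :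
    C ∈ T'.val ∧ DLConcept.all (.atom r) C ∈ T'.val := by
  induction h with
  | single h => exact ⟨(h.1 C hC).1, (h.1 C hC).2 hr⟩
  | tail h e ih => exact ⟨(e.1 C ih.2).1, (e.1 C ih.2).2 hr⟩

theorem prop2 {T T' : {T : List DLConcept // T ∈ F}}
    (h : Relation.TransGen (ERel L F r) T T') (hr : r % 2 = 0) (C : DLConcept)
    (hC : DLConcept.all (.inv r) C ∈ T'.val) :
    C ∈ T.val ∧ DLConcept.all (.inv r) C ∈ T.val := by
  induction h with
  | single h => exact ⟨(h.2.1 C hC).1, (h.2.1 C hC).2 hr⟩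
  | tail h e ih =>
      have h1 := (e.2.1 C hC)
      exact ⟨(ih (h1.2 hr)).1, (ih (h1.2 hr)).2⟩

theorem prop3 {T T' : {T : List DLConcept // T ∈ F}}
    (h : Relation.TransGen (ERel L F r) T T') (hr : r % 2 = 0) (C : DLConcept)
    (hL : DLConcept.ex (.atom r) C ∈ L) (hC : DLConcept.ex (.atom r) C ∉ T.val) :
    C ∉ T'.val ∧ DLConcept.ex (.atom r) C ∉ T'.val := by
  induction h with
  | single h => exact ⟨(h.2.2.1 C hL hC).1, (h.2.2.1 C hL hC).2 hr⟩
  | tail h e ih => exact ⟨(e.2.2.1 C hL ih.2).1, (e.2.2.1 C hL ih.2).2 hr⟩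

theorem prop4 {T T' : {T : List DLConcept // T ∈ F}}
    (h : Relation.TransGen (ERel L F r) T T') (hr : r % 2 = 0) (C : DLConcept)
    (hL : DLConcept.ex (.inv r) C ∈ L) (hC : DLConcept.ex (.inv r) C ∉ T'.val) :
    C ∉ T.val ∧ DLConcept.ex (.inv r) C ∉ T.val := by
  induction h with
  | single h => exact ⟨(h.2.2.2 C hL hC).1, (h.2.2.2 C hL hC).2 hr⟩
  | tail h e ih =>
      have h1 := e.2.2.2 C hL hC
      exact ⟨(ih (h1.2 hr)).1, (ih (h1.2 hr)).2⟩

end Prop_lemmas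

theorem truth (L : List DLConcept) (F : List (List DLConcept))
    (hL : ∀ X ∈ L, subc X ⊆ L) (hSI : ∀ X ∈ L, X.IsSI)
    (hF1 : ∀ T ∈ F, Hin L T) (hF2 : ∀ T ∈ F, Good L F T)
    (T0 : List DLConcept) (hT0 : T0 ∈ F) :
    ∀ X : DLConcept, X ∈ L → ∀ T : {T : List DLConcept // T ∈ F},
      (X ∈ T.val ↔ T ∈ (Mod L F T0 hT0).cSem X) := by
  intro X
  induction X with
  | top =>
      intro hX T
      simp only [Interp.cSem, Set.mem_univ, iff_true]
      exact iff_of_true ((hF1 T.val T.2).2 _ hX) trivial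
  | bot =>
      intro hX T
      simp only [Interp.cSem, Set.mem_empty_iff_false, iff_false]
      exact iff_of_false ((hF1 T.val T.2).2 _ hX) (fun h => h)
  | atom a =>
      intro hX T
      simp only [Interp.cSem, Mod]
      rfl
  | neg C ih =>
      intro hX T
      have hCL : C ∈ L := hL _ hX (List.mem_cons_of_mem _ (mem_subc_self C))
      have hloc := (hF1 T.val T.2).2 _ hX
      simp only [HinLoc] at hloc
      simp only [Interp.cSem, Set.mem_compl_iff]
      rw [hloc, ih hCL T]
      exact Iff.rfl
  | and C D ihC ihD =>
      intro hX T
      have hCL : C ∈ L := hL _ hX (List.mem_cons_of_mem _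
        (List.mem_append.2 (Or.inl (mem_subc_self C))))
      have hDL : D ∈ L := hL _ hX (List.mem_cons_of_mem _
        (List.mem_append.2 (Or.inr (mem_subc_self D))))
      have hloc := (hF1 T.val T.2).2 _ hX
      simp only [HinLoc] at hloc
      simp only [Interp.cSem, Set.mem_inter_iff]
      rw [hloc, ihC hCL T, ihD hDL T]
      exact Iff.rfl
  | or C D ihC ihD =>
      intro hX T
      have hCL : C ∈ L := hL _ hX (List.mem_cons_of_mem _
        (List.mem_append.2 (Or.inl (mem_subc_self C))))
      have hDL : D ∈ L := hL _ hX (List.mem_cons_of_mem _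
        (List.mem_append.2 (Or.inr (mem_subc_self D))))
      have hloc := (hF1 T.val T.2).2 _ hX
      simp only [HinLoc] at hloc
      simp only [Interp.cSem, Set.mem_union]
      rw [hloc, ihC hCL T, ihD hDL T]
      exact Iff.rfl
  | all R C ih =>
      intro hX T
      have hCL : C ∈ L := hL _ hX (List.mem_cons_of_mem _ (mem_subc_self C))
      obtain ⟨r⟩ | ⟨r⟩ := R
      · constructor
        · intro hbox y hy
          apply (ih hCL y).1
          change (if r % 2 = 0 then Relation.TransGen (ERel L F r) else ERel L F r) T y at hy
          by_cases hr : r % 2 = 0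
          · rw [if_pos hr] at hy
            exact (prop1 hy hr C hbox).1
          · rw [if_neg hr] at hy
            exact (hy.1 C hbox).1
        · intro hsem
          by_contra hbox
          have hg := hF2 T.val T.2 _ hX
          simp only [GoodLoc] at hg
          obtain ⟨T', hT', hE, hC⟩ := hg hbox
          have hy : (Mod L F T0 hT0).rSem (.atom r) T ⟨T', hT'⟩ := by
            change (if r % 2 = 0 then Relation.TransGen (ERel L F r) else ERel L F r) T _
            by_cases hr : r % 2 = 0
            · rw [if_pos hr]; exact Relation.TransGen.single hE
            · rw [if_neg hr]; exact hE
          exact hC ((ih hCL ⟨T', hT'⟩).2 (hsem _ hy))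
      · constructor
        · intro hbox y hy
          apply (ih hCL y).1
          change (if r % 2 = 0 then Relation.TransGen (ERel L F r) else ERel L F r) y T at hy
          by_cases hr : r % 2 = 0
          · rw [if_pos hr] at hy
            exact (prop2 hy hr C hbox).1
          · rw [if_neg hr] at hy
            exact (hy.2.1 C hbox).1
        · intro hsem
          by_contra hbox
          have hg := hF2 T.val T.2 _ hX
          simp only [GoodLoc] at hg
          obtain ⟨T', hT', hE, hC⟩ := hg hbox
          have hy : (Mod L F T0 hT0).rSem (.inv r) T ⟨T', hT'⟩ := by
            change (if r % 2 = 0 then Relation.TransGen (ERel L F r) else ERel L F r) _ T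
            by_cases hr : r % 2 = 0
            · rw [if_pos hr]; exact Relation.TransGen.single hE
            · rw [if_neg hr]; exact hE
          exact hC ((ih hCL ⟨T', hT'⟩).2 (hsem _ hy))
  | ex R C ih =>
      intro hX T
      have hCL : C ∈ L := hL _ hX (List.mem_cons_of_mem _ (mem_subc_self C))
      obtain ⟨r⟩ | ⟨r⟩ := R
      · constructor
        · intro hdia
          have hg := hF2 T.val T.2 _ hX
          simp only [GoodLoc] at hg
          obtain ⟨T', hT', hE, hC⟩ := hg hdia
          refine ⟨⟨T', hT'⟩, ?_, (ih hCL ⟨T', hT'⟩).1 hC⟩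
          change (if r % 2 = 0 then Relation.TransGen (ERel L F r) else ERel L F r) T _
          by_cases hr : r % 2 = 0
          · rw [if_pos hr]; exact Relation.TransGen.single hE
          · rw [if_neg hr]; exact hE
        · rintro ⟨y, hy, hyC⟩
          by_contra hdia
          have hyC' : C ∈ y.val := (ih hCL y).2 hyC
          change (if r % 2 = 0 then Relation.TransGen (ERel L F r) else ERel L F r) T y at hy
          by_cases hr : r % 2 = 0
          · rw [if_pos hr] at hy
            exact (prop3 hy hr C hX hdia).1 hyC'
          · rw [if_neg hr] at hy
            exact (hy.2.2.1 C hX hdia).1 hyC'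
      · constructor
        · intro hdia
          have hg := hF2 T.val T.2 _ hX
          simp only [GoodLoc] at hg
          obtain ⟨T', hT', hE, hC⟩ := hg hdia
          refine ⟨⟨T', hT'⟩, ?_, (ih hCL ⟨T', hT'⟩).1 hC⟩
          change (if r % 2 = 0 then Relation.TransGen (ERel L F r) else ERel L F r) _ T
          by_cases hr : r % 2 = 0
          · rw [if_pos hr]; exact Relation.TransGen.single hE
          · rw [if_neg hr]; exact hE
        · rintro ⟨y, hy, hyC⟩
          by_contra hdia
          have hyC' : C ∈ y.val := (ih hCL y).2 hyC
          change (if r % 2 = 0 then Relation.TransGen (ERel L F r) else ERel L F r) y T at hy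
          by_cases hr : r % 2 = 0
          · rw [if_pos hr] at hy
            exact (prop4 hy hr C hX hdia).1 hyC'
          · rw [if_neg hr] at hy
            exact (hy.2.2.2 C hX hdia).1 hyC'
  | atleast n R C ih =>
      intro hX
      exact absurd (hSI _ hX) id
  | atmost n R C ih =>
      intro hX
      exact absurd (hSI _ hX) id

end SIDec

namespace SIDec

theorem satC_sound (D : DLConcept) (hSI : D.IsSI)
    (T0 : List DLConcept) (hT0 : T0 ∈ FP (subc D)) (hD : D ∈ T0) :
    SatisfiableSI evenRp D := by
  refine ⟨Mod (subc D) (FP (subc D)) T0 hT0, mod_good _ _ _ _, ⟨⟨T0, hT0⟩, ?_⟩⟩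
  exact (truth (subc D) (FP (subc D)) (subc_trans D) (subc_isSI D hSI)
    (fun T hT => (mem_FP_hin _ _ hT).1) (mem_FP_good _) T0 hT0 D (mem_subc_self D)
    ⟨T0, hT0⟩).1 hD

theorem satC_complete (D : DLConcept) (h : SatisfiableSI evenRp D) :
    ∃ T ∈ FP (subc D), D ∈ T := by
  classical
  obtain ⟨I, hGood, x0, hx0⟩ := h
  set L := subc D with hLdef
  have hL : ∀ X ∈ L, subc X ⊆ L := subc_trans D
  set tau : I.Dom → List DLConcept := fun x => L.filter fun X => decide (x ∈ I.cSem X)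
    with htau
  have mem_tau : ∀ (x : I.Dom) (X : DLConcept), X ∈ tau x ↔ X ∈ L ∧ x ∈ I.cSem X := by
    intro x X
    simp [htau, List.mem_filter]
  have htrans : ∀ r : ℕ, r % 2 = 0 → Transitive (I.rI r) := fun r hr => hGood r hr
  -- semantic edges
  have hedge : ∀ (r : ℕ) (x y : I.Dom), I.rI r x y → Edge L (tau x) (tau y) r := by
    intro r x y hxy
    refine ⟨?_, ?_, ?_, ?_⟩
    · intro C hC
      rw [mem_tau] at hC
      obtain ⟨hCL, hCsem⟩ := hC
      have hCL' : C ∈ L := hL _ hCL (List.mem_cons_of_mem _ (mem_subc_self C))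
      simp only [Interp.cSem, Set.mem_setOf_eq] at hCsem
      constructor
      · rw [mem_tau]
        exact ⟨hCL', hCsem y hxy⟩
      · intro hr
        rw [mem_tau]
        refine ⟨hCL, ?_⟩
        simp only [Interp.cSem, Set.mem_setOf_eq]
        intro z hyz
        exact hCsem z (htrans r hr hxy hyz)
    · intro C hC
      rw [mem_tau] at hC
      obtain ⟨hCL, hCsem⟩ := hC
      have hCL' : C ∈ L := hL _ hCL (List.mem_cons_of_mem _ (mem_subc_self C))
      simp only [Interp.cSem, Set.mem_setOf_eq] at hCsem
      constructor
      · rw [mem_tau]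
        exact ⟨hCL', hCsem x hxy⟩
      · intro hr
        rw [mem_tau]
        refine ⟨hCL, ?_⟩
        simp only [Interp.cSem, Set.mem_setOf_eq]
        intro z hzx
        exact hCsem z (htrans r hr hzx hxy)
    · intro C hCL hC
      rw [mem_tau] at hC
      push_neg at hC
      have hnot := hC hCL
      simp only [Interp.cSem, Set.mem_setOf_eq] at hnot
      push_neg at hnot
      constructor
      · rw [mem_tau]
        rintro ⟨-, hCy⟩
        exact hnot y hxy hCy
      · intro hr
        rw [mem_tau]
        rintro ⟨-, hdia⟩
        simp only [Interp.cSem, Set.mem_setOf_eq] at hdia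
        obtain ⟨z, hyz, hCz⟩ := hdia
        exact hnot z (htrans r hr hxy hyz) hCz
    · intro C hCL hC
      rw [mem_tau] at hC
      push_neg at hC
      have hnot := hC hCL
      simp only [Interp.cSem, Set.mem_setOf_eq] at hnot
      push_neg at hnot
      constructor
      · rw [mem_tau]
        rintro ⟨-, hCx⟩
        exact hnot x hxy hCx
      · intro hr
        rw [mem_tau]
        rintro ⟨-, hdia⟩
        simp only [Interp.cSem, Set.mem_setOf_eq] at hdia
        obtain ⟨z, hzx, hCz⟩ := hdia
        exact hnot z (htrans r hr hzx hxy) hCz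
  -- every realized type is a Hintikka set
  have hhin : ∀ x : I.Dom, Hin L (tau x) := by
    intro x
    constructor
    · intro X hX
      exact ((mem_tau x X).1 hX).1
    · intro X hX
      cases X with
      | top =>
          simp only [HinLoc]
          rw [mem_tau]
          exact ⟨hX, trivial⟩
      | bot =>
          simp only [HinLoc]
          rw [mem_tau]
          rintro ⟨-, h⟩
          exact h
      | atom a => simp [HinLoc]
      | neg C =>
          have hCL : C ∈ L := hL _ hX (List.mem_cons_of_mem _ (mem_subc_self C))
          simp only [HinLoc]
          rw [mem_tau, mem_tau]
          simp only [Interp.cSem, Set.mem_compl_iff]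
          constructor
          · rintro ⟨-, h⟩ ⟨-, h'⟩
            exact h h'
          · intro h
            refine ⟨hX, fun h' => h ⟨hCL, h'⟩⟩
      | and C D' =>
          have hCL : C ∈ L := hL _ hX (List.mem_cons_of_mem _
            (List.mem_append.2 (Or.inl (mem_subc_self C))))
          have hDL : D' ∈ L := hL _ hX (List.mem_cons_of_mem _
            (List.mem_append.2 (Or.inr (mem_subc_self D'))))
          simp only [HinLoc]
          rw [mem_tau, mem_tau, mem_tau]
          simp only [Interp.cSem, Set.mem_inter_iff]
          constructor
          · rintro ⟨-, h1, h2⟩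
            exact ⟨⟨hCL, h1⟩, ⟨hDL, h2⟩⟩
          · rintro ⟨⟨-, h1⟩, ⟨-, h2⟩⟩
            exact ⟨hX, h1, h2⟩
      | or C D' =>
          have hCL : C ∈ L := hL _ hX (List.mem_cons_of_mem _
            (List.mem_append.2 (Or.inl (mem_subc_self C))))
          have hDL : D' ∈ L := hL _ hX (List.mem_cons_of_mem _
            (List.mem_append.2 (Or.inr (mem_subc_self D'))))
          simp only [HinLoc]
          rw [mem_tau, mem_tau, mem_tau]
          simp only [Interp.cSem, Set.mem_union]
          constructor
          · rintro ⟨-, h1 | h2⟩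
            · exact Or.inl ⟨hCL, h1⟩
            · exact Or.inr ⟨hDL, h2⟩
          · rintro (⟨-, h1⟩ | ⟨-, h2⟩)
            · exact ⟨hX, Or.inl h1⟩
            · exact ⟨hX, Or.inr h2⟩
      | all R C => simp [HinLoc]
      | ex R C => simp [HinLoc]
      | atleast n R C => simp [HinLoc]
      | atmost n R C => simp [HinLoc]
  -- realized types survive all elimination rounds
  have hsurv : ∀ (n : ℕ) (x : I.Dom), tau x ∈ (step L)^[n] (S0 L) := by
    intro n
    induction n with
    | zero =>
        intro x
        simp only [Function.iterate_zero, id, S0, List.mem_filter]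
        exact ⟨filter_mem_sublC _ L, by simpa using hhin x⟩
    | succ n ih =>
        intro x
        rw [Function.iterate_succ_apply']
        rw [step, List.mem_filter]
        refine ⟨ih x, ?_⟩
        simp only [decide_eq_true_eq]
        intro X hX
        cases X with
        | ex R C =>
            have hCL : C ∈ L := hL _ hX (List.mem_cons_of_mem _ (mem_subc_self C))
            obtain ⟨r⟩ | ⟨r⟩ := R
            · simp only [GoodLoc]
              intro hdia
              rw [mem_tau] at hdia
              obtain ⟨-, hsem⟩ := hdia
              simp only [Interp.cSem, Set.mem_setOf_eq, Interp.rSem] at hsem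
              obtain ⟨y, hxy, hCy⟩ := hsem
              exact ⟨tau y, ih y, hedge r x y hxy, (mem_tau y C).2 ⟨hCL, hCy⟩⟩
            · simp only [GoodLoc]
              intro hdia
              rw [mem_tau] at hdia
              obtain ⟨-, hsem⟩ := hdia
              simp only [Interp.cSem, Set.mem_setOf_eq, Interp.rSem] at hsem
              obtain ⟨y, hyx, hCy⟩ := hsem
              exact ⟨tau y, ih y, hedge r y x hyx, (mem_tau y C).2 ⟨hCL, hCy⟩⟩
        | all R C =>
            have hCL : C ∈ L := hL _ hX (List.mem_cons_of_mem _ (mem_subc_self C))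
            obtain ⟨r⟩ | ⟨r⟩ := R
            · simp only [GoodLoc]
              intro hbox
              rw [mem_tau] at hbox
              push_neg at hbox
              have hnot := hbox hX
              simp only [Interp.cSem, Set.mem_setOf_eq, Interp.rSem] at hnot
              push_neg at hnot
              obtain ⟨y, hxy, hCy⟩ := hnot
              refine ⟨tau y, ih y, hedge r x y hxy, ?_⟩
              rw [mem_tau]
              rintro ⟨-, h⟩
              exact hCy h
            · simp only [GoodLoc]
              intro hbox
              rw [mem_tau] at hbox
              push_neg at hbox
              have hnot := hbox hX
              simp only [Interp.cSem, Set.mem_setOf_eq, Interp.rSem] at hnot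
              push_neg at hnot
              obtain ⟨y, hyx, hCy⟩ := hnot
              refine ⟨tau y, ih y, hedge r y x hyx, ?_⟩
              rw [mem_tau]
              rintro ⟨-, h⟩
              exact hCy h
        | top => simp [GoodLoc]
        | bot => simp [GoodLoc]
        | atom a => simp [GoodLoc]
        | neg C => simp [GoodLoc]
        | and C D' => simp [GoodLoc]
        | or C D' => simp [GoodLoc]
        | atleast n' R C => simp [GoodLoc]
        | atmost n' R C => simp [GoodLoc]
  refine ⟨tau x0, hsurv (S0 L).length x0, ?_⟩
  rw [mem_tau]
  exact ⟨mem_subc_self D, hx0⟩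

/-- Concept-level decision of satisfiability is correct. -/
theorem satC_iff (D : DLConcept) (hSI : D.IsSI) :
    (∃ T ∈ FP (subc D), D ∈ T) ↔ SatisfiableSI evenRp D :=
  ⟨fun ⟨T, hT, hD⟩ => satC_sound D hSI T hT hD, satC_complete D⟩

/-- Subsumption reduces to (un)satisfiability. -/
theorem subsumesSI_iff (C D : DLConcept) :
    SubsumesSI evenRp C D ↔ ¬ SatisfiableSI evenRp (.and C (.neg D)) := by
  constructor
  · rintro hsub ⟨I, hGood, x, hx⟩
    simp only [Interp.cSem, Set.mem_inter_iff, Set.mem_compl_iff] at hx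
    exact hx.2 (hsub I hGood hx.1)
  · intro hunsat I hGood x hx
    by_contra hD
    exact hunsat ⟨I, hGood, x, by
      simp only [Interp.cSem, Set.mem_inter_iff, Set.mem_compl_iff]
      exact ⟨hx, hD⟩⟩

end SIDec

namespace SIDec

/-! ### Part B: the code-level algorithm -/

def bin (x : ℕ) (T : List ℕ) : Bool := T.any fun y => y == x

theorem bin_iff (x : ℕ) (T : List ℕ) : bin x T = true ↔ x ∈ T := by
  simp [bin]

theorem unpair_right_lt {n : ℕ} (h : 1 ≤ n.unpair.1) : n.unpair.2 < n := by
  conv_rhs => rw [← Nat.pair_unpair n]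
  rcases hab : n.unpair with ⟨a, b⟩
  rw [hab] at h
  simp only at h ⊢
  rw [Nat.pair]
  split
  next hlt =>
    have h2 : 2 ≤ b := by omega
    have h3 : 2 * b ≤ b * b := Nat.mul_le_mul_right b h2
    omega
  next hlt => omega

def clCode (n : ℕ) : List ℕ :=
  if h3 : n.unpair.1 = 3 then n :: clCode n.unpair.2
  else if h45 : n.unpair.1 = 4 ∨ n.unpair.1 = 5 then
    n :: (clCode n.unpair.2.unpair.1 ++ clCode n.unpair.2.unpair.2)
  else if h67 : n.unpair.1 = 6 ∨ n.unpair.1 = 7 then n :: clCode n.unpair.2.unpair.2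
  else if h89 : n.unpair.1 = 8 ∨ n.unpair.1 = 9 then n :: clCode n.unpair.2.unpair.2.unpair.2
  else [n]
termination_by n
decreasing_by
  · exact unpair_right_lt (by omega)
  · exact lt_of_le_of_lt (Nat.unpair_left_le _) (unpair_right_lt (by omega))
  · exact lt_of_le_of_lt (Nat.unpair_right_le _) (unpair_right_lt (by omega))
  · exact lt_of_le_of_lt (Nat.unpair_right_le _) (unpair_right_lt (by omega))
  · exact lt_of_le_of_lt
      (le_trans (Nat.unpair_right_le _) (Nat.unpair_right_le _)) (unpair_right_lt (by omega))

def hinLocB (T : List ℕ) (x : ℕ) : Bool :=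
  let t := x.unpair.1
  let y := x.unpair.2
  if t = 0 then bin x T
  else if t = 1 then !bin x T
  else if t = 3 then bin x T == !bin y T
  else if t = 4 then bin x T == (bin y.unpair.1 T && bin y.unpair.2 T)
  else if t = 5 then bin x T == (bin y.unpair.1 T || bin y.unpair.2 T)
  else true

def hinB (L T : List ℕ) : Bool :=
  (T.all fun x => bin x L) && (L.all fun x => hinLocB T x)

def edgeLocB (T T' : List ℕ) (r x : ℕ) : Bool :=
  let t := x.unpair.1
  let rc := x.unpair.2.unpair.1
  let c := x.unpair.2.unpair.2
  if t = 6 ∧ rc = 2 * r then !bin x T || (bin c T' && (!(r % 2 == 0) || bin x T'))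
  else if t = 6 ∧ rc = 2 * r + 1 then !bin x T' || (bin c T && (!(r % 2 == 0) || bin x T))
  else if t = 7 ∧ rc = 2 * r then bin x T || (!bin c T' && (!(r % 2 == 0) || !bin x T'))
  else if t = 7 ∧ rc = 2 * r + 1 then bin x T' || (!bin c T && (!(r % 2 == 0) || !bin x T))
  else true

def edgeB (L T T' : List ℕ) (r : ℕ) : Bool := L.all (edgeLocB T T' r)

def goodLocB (L : List ℕ) (S : List (List ℕ)) (T : List ℕ) (x : ℕ) : Bool :=
  let t := x.unpair.1
  let rc := x.unpair.2.unpair.1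
  let c := x.unpair.2.unpair.2
  if t = 7 ∧ rc % 2 = 0 then !bin x T || S.any fun T' => edgeB L T T' (rc / 2) && bin c T'
  else if t = 7 ∧ rc % 2 = 1 then !bin x T || S.any fun T' => edgeB L T' T (rc / 2) && bin c T'
  else if t = 6 ∧ rc % 2 = 0 then bin x T || S.any fun T' => edgeB L T T' (rc / 2) && !bin c T'
  else if t = 6 ∧ rc % 2 = 1 then bin x T || S.any fun T' => edgeB L T' T (rc / 2) && !bin c T'
  else true

def goodB (L : List ℕ) (S : List (List ℕ)) (T : List ℕ) : Bool := L.all (goodLocB L S T)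

def stepB (L : List ℕ) (S : List (List ℕ)) : List (List ℕ) := S.filter (goodB L S)

def sublB : List ℕ → List (List ℕ)
  | [] => [[]]
  | a :: l => sublB l ++ (sublB l).map (a :: ·)

def satB (n : ℕ) : Bool :=
  let L := clCode n
  let S := (sublB L).filter (hinB L)
  ((stepB L)^[S.length] S).any fun T => bin n T

def subB (n : ℕ) : Bool :=
  !satB (Nat.pair 4 (Nat.pair n.unpair.1 (Nat.pair 3 n.unpair.2)))

end SIDec

namespace SIDec

theorem role_code_inj : Function.Injective Role.code := by
  intro R S h
  cases R <;> cases S <;> simp [Role.code] at h ⊢ <;> omega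

theorem code_inj : Function.Injective DLConcept.code := by
  intro C
  induction C with
  | top => intro D h; cases D <;> simp [DLConcept.code, Nat.pair_eq_pair] at h <;> rfl
  | bot => intro D h; cases D <;> simp [DLConcept.code, Nat.pair_eq_pair] at h <;> rfl
  | atom a => intro D h; cases D <;> simp [DLConcept.code, Nat.pair_eq_pair] at h <;> simp [h]
  | neg C ih =>
      intro D h
      cases D <;> simp [DLConcept.code, Nat.pair_eq_pair] at h
      rw [ih h]
  | and C C' ihC ihC' =>
      intro D h
      cases D <;> simp [DLConcept.code, Nat.pair_eq_pair] at h
      rw [ihC h.1, ihC' h.2]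
  | or C C' ihC ihC' =>
      intro D h
      cases D <;> simp [DLConcept.code, Nat.pair_eq_pair] at h
      rw [ihC h.1, ihC' h.2]
  | all R C ih =>
      intro D h
      cases D <;> simp [DLConcept.code, Nat.pair_eq_pair] at h
      rw [role_code_inj h.1, ih h.2]
  | ex R C ih =>
      intro D h
      cases D <;> simp [DLConcept.code, Nat.pair_eq_pair] at h
      rw [role_code_inj h.1, ih h.2]
  | atleast n R C ih =>
      intro D h
      cases D <;> simp [DLConcept.code, Nat.pair_eq_pair] at h
      rw [h.1, role_code_inj h.2.1, ih h.2.2]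
  | atmost n R C ih =>
      intro D h
      cases D <;> simp [DLConcept.code, Nat.pair_eq_pair] at h
      rw [h.1, role_code_inj h.2.1, ih h.2.2]

theorem bin_code (X : DLConcept) (T : List DLConcept) :
    bin X.code (T.map DLConcept.code) = decide (X ∈ T) := by
  rcases h : decide (X ∈ T) with _ | _
  · simp only [decide_eq_false_iff_not] at h
    rw [← Bool.not_eq_true, bin_iff]
    intro hmem
    rcases List.mem_map.1 hmem with ⟨Y, hY, hc⟩
    exact h (code_inj hc ▸ hY)
  · simp only [decide_eq_true_eq] at h
    rw [bin_iff]
    exact List.mem_map.2 ⟨X, h, rfl⟩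

theorem clCode_code : ∀ D : DLConcept, clCode D.code = (subc D).map DLConcept.code := by
  intro D
  induction D with
  | top => rw [clCode]; simp [DLConcept.code, subc, Nat.unpair_pair]
  | bot => rw [clCode]; simp [DLConcept.code, subc, Nat.unpair_pair]
  | atom a => rw [clCode]; simp [DLConcept.code, subc, Nat.unpair_pair]
  | neg C ih =>
      rw [clCode]
      simp [DLConcept.code, subc, Nat.unpair_pair, ih]
  | and C D ihC ihD =>
      rw [clCode]
      simp [DLConcept.code, subc, Nat.unpair_pair, ihC, ihD]
  | or C D ihC ihD =>
      rw [clCode]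
      simp [DLConcept.code, subc, Nat.unpair_pair, ihC, ihD]
  | all R C ih =>
      rw [clCode]
      simp [DLConcept.code, subc, Nat.unpair_pair, ih]
  | ex R C ih =>
      rw [clCode]
      simp [DLConcept.code, subc, Nat.unpair_pair, ih]
  | atleast n R C ih =>
      rw [clCode]
      simp [DLConcept.code, subc, Nat.unpair_pair, ih]
  | atmost n R C ih =>
      rw [clCode]
      simp [DLConcept.code, subc, Nat.unpair_pair, ih]

end SIDec

namespace SIDec

theorem bin_code_top (T : List DLConcept) :
    bin (Nat.pair 0 0) (T.map DLConcept.code) = decide (DLConcept.top ∈ T) := bin_code .top T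

theorem bin_code_bot (T : List DLConcept) :
    bin (Nat.pair 1 0) (T.map DLConcept.code) = decide (DLConcept.bot ∈ T) := bin_code .bot T

theorem bin_code_atom (a : ℕ) (T : List DLConcept) :
    bin (Nat.pair 2 a) (T.map DLConcept.code) = decide (DLConcept.atom a ∈ T) :=
  bin_code (.atom a) T

theorem bin_code_neg (C : DLConcept) (T : List DLConcept) :
    bin (Nat.pair 3 C.code) (T.map DLConcept.code) = decide (DLConcept.neg C ∈ T) :=
  bin_code (.neg C) T

theorem bin_code_and (C D : DLConcept) (T : List DLConcept) :
    bin (Nat.pair 4 (Nat.pair C.code D.code)) (T.map DLConcept.code)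
      = decide (DLConcept.and C D ∈ T) := bin_code (.and C D) T

theorem bin_code_or (C D : DLConcept) (T : List DLConcept) :
    bin (Nat.pair 5 (Nat.pair C.code D.code)) (T.map DLConcept.code)
      = decide (DLConcept.or C D ∈ T) := bin_code (.or C D) T

theorem bin_code_all (R : Role) (C : DLConcept) (T : List DLConcept) :
    bin (Nat.pair 6 (Nat.pair R.code C.code)) (T.map DLConcept.code)
      = decide (DLConcept.all R C ∈ T) := bin_code (.all R C) T

theorem bin_code_ex (R : Role) (C : DLConcept) (T : List DLConcept) :
    bin (Nat.pair 7 (Nat.pair R.code C.code)) (T.map DLConcept.code)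
      = decide (DLConcept.ex R C ∈ T) := bin_code (.ex R C) T

theorem bin_code_all_atom (r : ℕ) (C : DLConcept) (T : List DLConcept) :
    bin (Nat.pair 6 (Nat.pair (2 * r) C.code)) (T.map DLConcept.code)
      = decide (DLConcept.all (.atom r) C ∈ T) := bin_code (.all (.atom r) C) T

theorem bin_code_all_inv (r : ℕ) (C : DLConcept) (T : List DLConcept) :
    bin (Nat.pair 6 (Nat.pair (2 * r + 1) C.code)) (T.map DLConcept.code)
      = decide (DLConcept.all (.inv r) C ∈ T) := bin_code (.all (.inv r) C) T

theorem bin_code_ex_atom (r : ℕ) (C : DLConcept) (T : List DLConcept) :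
    bin (Nat.pair 7 (Nat.pair (2 * r) C.code)) (T.map DLConcept.code)
      = decide (DLConcept.ex (.atom r) C ∈ T) := bin_code (.ex (.atom r) C) T

theorem bin_code_ex_inv (r : ℕ) (C : DLConcept) (T : List DLConcept) :
    bin (Nat.pair 7 (Nat.pair (2 * r + 1) C.code)) (T.map DLConcept.code)
      = decide (DLConcept.ex (.inv r) C ∈ T) := bin_code (.ex (.inv r) C) T

end SIDec

namespace SIDec

theorem hinLocB_code (T : List DLConcept) (X : DLConcept) :
    hinLocB (T.map DLConcept.code) X.code = true ↔ HinLoc T X := by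
  cases X with
  | top =>
      simp [hinLocB, DLConcept.code, Nat.unpair_pair, bin_code_top, HinLoc]
  | bot =>
      simp [hinLocB, DLConcept.code, Nat.unpair_pair, bin_code_bot, HinLoc]
  | atom a =>
      simp [hinLocB, DLConcept.code, Nat.unpair_pair, HinLoc]
  | neg C =>
      simp only [hinLocB, DLConcept.code, Nat.unpair_pair, HinLoc]
      norm_num
      rw [bin_code_neg, bin_code]
      by_cases h1 : DLConcept.neg C ∈ T <;> by_cases h2 : C ∈ T <;> simp [h1, h2]
  | and C D =>
      simp only [hinLocB, DLConcept.code, Nat.unpair_pair, HinLoc]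
      norm_num
      rw [bin_code_and, bin_code, bin_code]
      by_cases h1 : DLConcept.and C D ∈ T <;> by_cases h2 : C ∈ T <;> by_cases h3 : D ∈ T <;>
        simp [h1, h2, h3]
  | or C D =>
      simp only [hinLocB, DLConcept.code, Nat.unpair_pair, HinLoc]
      norm_num
      rw [bin_code_or, bin_code, bin_code]
      by_cases h1 : DLConcept.or C D ∈ T <;> by_cases h2 : C ∈ T <;> by_cases h3 : D ∈ T <;>
        simp [h1, h2, h3]
  | all R C =>
      simp [hinLocB, DLConcept.code, Nat.unpair_pair, HinLoc]
  | ex R C =>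
      simp [hinLocB, DLConcept.code, Nat.unpair_pair, HinLoc]
  | atleast n R C =>
      simp [hinLocB, DLConcept.code, Nat.unpair_pair, HinLoc]
  | atmost n R C =>
      simp [hinLocB, DLConcept.code, Nat.unpair_pair, HinLoc]

theorem hinB_code (L T : List DLConcept) :
    hinB (L.map DLConcept.code) (T.map DLConcept.code) = true ↔ Hin L T := by
  rw [hinB, Hin, Bool.and_eq_true, List.all_eq_true, List.all_eq_true]
  constructor
  · rintro ⟨h1, h2⟩
    constructor
    · intro X hX
      have := h1 _ (List.mem_map.2 ⟨X, hX, rfl⟩)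
      rw [bin_code, decide_eq_true_eq] at this
      exact this
    · intro X hX
      have := h2 _ (List.mem_map.2 ⟨X, hX, rfl⟩)
      rw [hinLocB_code] at this
      exact this
  · rintro ⟨h1, h2⟩
    constructor
    · intro x hx
      rcases List.mem_map.1 hx with ⟨X, hX, rfl⟩
      rw [bin_code, decide_eq_true_eq]
      exact h1 X hX
    · intro x hx
      rcases List.mem_map.1 hx with ⟨X, hX, rfl⟩
      rw [hinLocB_code]
      exact h2 X hX

theorem sublB_code : ∀ L : List DLConcept,
    sublB (L.map DLConcept.code) = (sublC L).map (List.map DLConcept.code) := by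
  intro L
  induction L with
  | nil => simp [sublB, sublC]
  | cons a l ih =>
      simp only [List.map_cons, sublB, sublC, ih, List.map_append, List.map_map]
      rfl

end SIDec

namespace SIDec

/-- Local (per-formula) version of the edge condition. -/
def EdgeLoc (T T' : List DLConcept) (r : ℕ) : DLConcept → Prop
  | .all (.atom r') C => r' = r →
      (DLConcept.all (.atom r) C ∈ T → C ∈ T' ∧ (r % 2 = 0 → DLConcept.all (.atom r) C ∈ T'))
  | .all (.inv r') C => r' = r →
      (DLConcept.all (.inv r) C ∈ T' → C ∈ T ∧ (r % 2 = 0 → DLConcept.all (.inv r) C ∈ T))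
  | .ex (.atom r') C => r' = r →
      (DLConcept.ex (.atom r) C ∉ T → C ∉ T' ∧ (r % 2 = 0 → DLConcept.ex (.atom r) C ∉ T'))
  | .ex (.inv r') C => r' = r →
      (DLConcept.ex (.inv r) C ∉ T' → C ∉ T ∧ (r % 2 = 0 → DLConcept.ex (.inv r) C ∉ T))
  | _ => True

theorem edge_iff (L T T' : List DLConcept) (r : ℕ)
    (hT : ∀ X ∈ T, X ∈ L) (hT' : ∀ X ∈ T', X ∈ L) :
    Edge L T T' r ↔ ∀ X ∈ L, EdgeLoc T T' r X := by
  constructor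
  · rintro ⟨h1, h2, h3, h4⟩ X hX
    cases X with
    | all R C =>
        obtain ⟨r'⟩ | ⟨r'⟩ := R
        · intro hr; subst hr; exact h1 C
        · intro hr; subst hr; exact h2 C
    | ex R C =>
        obtain ⟨r'⟩ | ⟨r'⟩ := R
        · intro hr; subst hr; exact h3 C hX
        · intro hr; subst hr; exact h4 C hX
    | top => trivial
    | bot => trivial
    | atom a => trivial
    | neg C => trivial
    | and C D => trivial
    | or C D => trivial
    | atleast n R C => trivial
    | atmost n R C => trivial
  · intro h
    refine ⟨?_, ?_, ?_, ?_⟩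
    · intro C hC
      exact h _ (hT _ hC) rfl hC
    · intro C hC
      exact h _ (hT' _ hC) rfl hC
    · intro C hCL hC
      exact h _ hCL rfl hC
    · intro C hCL hC
      exact h _ hCL rfl hC

theorem edgeLocB_code (T T' : List DLConcept) (r : ℕ) (X : DLConcept) :
    edgeLocB (T.map DLConcept.code) (T'.map DLConcept.code) r X.code = true ↔
      EdgeLoc T T' r X := by
  cases X with
  | top => simp [edgeLocB, DLConcept.code, Nat.unpair_pair, EdgeLoc]
  | bot => simp [edgeLocB, DLConcept.code, Nat.unpair_pair, EdgeLoc]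
  | atom a => simp [edgeLocB, DLConcept.code, Nat.unpair_pair, EdgeLoc]
  | neg C => simp [edgeLocB, DLConcept.code, Nat.unpair_pair, EdgeLoc]
  | and C D => simp [edgeLocB, DLConcept.code, Nat.unpair_pair, EdgeLoc]
  | or C D => simp [edgeLocB, DLConcept.code, Nat.unpair_pair, EdgeLoc]
  | atleast n R C => simp [edgeLocB, DLConcept.code, Nat.unpair_pair, EdgeLoc]
  | atmost n R C => simp [edgeLocB, DLConcept.code, Nat.unpair_pair, EdgeLoc]
  | all R C =>
      obtain ⟨r'⟩ | ⟨r'⟩ := R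
      · simp only [edgeLocB, DLConcept.code, Role.code, Nat.unpair_pair]
        by_cases hr : r' = r
        · subst hr
          rw [if_pos (⟨trivial, rfl⟩ : True ∧ 2 * r' = 2 * r')]
          rw [bin_code_all_atom, bin_code_all_atom, bin_code]
          simp only [EdgeLoc, forall_const]
          by_cases h1 : DLConcept.all (.atom r') C ∈ T <;> by_cases h2 : C ∈ T' <;>
            by_cases h3 : DLConcept.all (.atom r') C ∈ T' <;> by_cases h4 : r' % 2 = 0 <;>
            simp [h1, h2, h3, h4]
        · rw [if_neg (by omega), if_neg (by omega), if_neg (by omega), if_neg (by omega)]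
          simp [EdgeLoc, hr]
      · simp only [edgeLocB, DLConcept.code, Role.code, Nat.unpair_pair]
        by_cases hr : r' = r
        · subst hr
          rw [if_neg (by omega), if_pos (⟨trivial, rfl⟩ : True ∧ 2 * r' + 1 = 2 * r' + 1)]
          rw [bin_code_all_inv, bin_code_all_inv, bin_code]
          simp only [EdgeLoc, forall_const]
          by_cases h1 : DLConcept.all (.inv r') C ∈ T' <;> by_cases h2 : C ∈ T <;>
            by_cases h3 : DLConcept.all (.inv r') C ∈ T <;> by_cases h4 : r' % 2 = 0 <;>
            simp [h1, h2, h3, h4]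
        · rw [if_neg (by omega), if_neg (by omega), if_neg (by omega), if_neg (by omega)]
          simp [EdgeLoc, hr]
  | ex R C =>
      obtain ⟨r'⟩ | ⟨r'⟩ := R
      · simp only [edgeLocB, DLConcept.code, Role.code, Nat.unpair_pair]
        by_cases hr : r' = r
        · subst hr
          rw [if_neg (by omega), if_neg (by omega), if_pos (⟨trivial, rfl⟩ : True ∧ 2 * r' = 2 * r')]
          rw [bin_code_ex_atom, bin_code_ex_atom, bin_code]
          simp only [EdgeLoc, forall_const]
          by_cases h1 : DLConcept.ex (.atom r') C ∈ T <;> by_cases h2 : C ∈ T' <;>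
            by_cases h3 : DLConcept.ex (.atom r') C ∈ T' <;> by_cases h4 : r' % 2 = 0 <;>
            simp [h1, h2, h3, h4]
        · rw [if_neg (by omega), if_neg (by omega), if_neg (by omega), if_neg (by omega)]
          simp [EdgeLoc, hr]
      · simp only [edgeLocB, DLConcept.code, Role.code, Nat.unpair_pair]
        by_cases hr : r' = r
        · subst hr
          rw [if_neg (by omega), if_neg (by omega), if_neg (by omega), if_pos (⟨trivial, rfl⟩ : True ∧ 2 * r' + 1 = 2 * r' + 1)]
          rw [bin_code_ex_inv, bin_code_ex_inv, bin_code]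
          simp only [EdgeLoc, forall_const]
          by_cases h1 : DLConcept.ex (.inv r') C ∈ T' <;> by_cases h2 : C ∈ T <;>
            by_cases h3 : DLConcept.ex (.inv r') C ∈ T <;> by_cases h4 : r' % 2 = 0 <;>
            simp [h1, h2, h3, h4]
        · rw [if_neg (by omega), if_neg (by omega), if_neg (by omega), if_neg (by omega)]
          simp [EdgeLoc, hr]

theorem edgeB_code (L T T' : List DLConcept) (r : ℕ)
    (hT : ∀ X ∈ T, X ∈ L) (hT' : ∀ X ∈ T', X ∈ L) :
    edgeB (L.map DLConcept.code) (T.map DLConcept.code) (T'.map DLConcept.code) r = true ↔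
      Edge L T T' r := by
  rw [edgeB, List.all_eq_true, edge_iff L T T' r hT hT']
  constructor
  · intro h X hX
    have := h _ (List.mem_map.2 ⟨X, hX, rfl⟩)
    rwa [edgeLocB_code] at this
  · intro h x hx
    rcases List.mem_map.1 hx with ⟨X, hX, rfl⟩
    rw [edgeLocB_code]
    exact h X hX

end SIDec

namespace SIDec

theorem any_map' {α β : Type*} (f : α → β) (l : List α) (p : β → Bool) :
    (l.map f).any p = l.any (p ∘ f) := by
  induction l with
  | nil => rfl
  | cons a l ih => simp [ih]

theorem goodLocB_code (L T : List DLConcept) (S : List (List DLConcept))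
    (hT : ∀ X ∈ T, X ∈ L) (hS : ∀ U ∈ S, ∀ X ∈ U, X ∈ L) (X : DLConcept) :
    goodLocB (L.map DLConcept.code) (S.map (List.map DLConcept.code))
      (T.map DLConcept.code) X.code = true ↔ GoodLoc L S T X := by
  cases X with
  | top => simp [goodLocB, DLConcept.code, Nat.unpair_pair, GoodLoc]
  | bot => simp [goodLocB, DLConcept.code, Nat.unpair_pair, GoodLoc]
  | atom a => simp [goodLocB, DLConcept.code, Nat.unpair_pair, GoodLoc]
  | neg C => simp [goodLocB, DLConcept.code, Nat.unpair_pair, GoodLoc]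
  | and C D => simp [goodLocB, DLConcept.code, Nat.unpair_pair, GoodLoc]
  | or C D => simp [goodLocB, DLConcept.code, Nat.unpair_pair, GoodLoc]
  | atleast n R C => simp [goodLocB, DLConcept.code, Nat.unpair_pair, GoodLoc]
  | atmost n R C => simp [goodLocB, DLConcept.code, Nat.unpair_pair, GoodLoc]
  | ex R C =>
      obtain ⟨r'⟩ | ⟨r'⟩ := R
      · simp only [goodLocB, DLConcept.code, Role.code, Nat.unpair_pair]
        rw [if_pos (⟨trivial, by omega⟩ : True ∧ 2 * r' % 2 = 0)]
        have hdiv : 2 * r' / 2 = r' := by omega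
        rw [hdiv, bin_code_ex_atom]
        simp only [GoodLoc]
        by_cases h1 : DLConcept.ex (.atom r') C ∈ T
        · simp only [h1, decide_true, Bool.not_true, Bool.false_or, true_implies]
          rw [any_map', List.any_eq_true]
          constructor
          · rintro ⟨U, hU, hedge⟩
            simp only [Function.comp_apply, Bool.and_eq_true] at hedge
            rw [edgeB_code L T U r' hT (hS U hU), bin_code, decide_eq_true_eq] at hedge
            exact ⟨U, hU, hedge.1, hedge.2⟩
          · rintro ⟨U, hU, he, hc⟩
            refine ⟨U, hU, ?_⟩
            simp only [Function.comp_apply, Bool.and_eq_true]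
            rw [edgeB_code L T U r' hT (hS U hU), bin_code, decide_eq_true_eq]
            exact ⟨he, hc⟩
        · simp [h1]
      · simp only [goodLocB, DLConcept.code, Role.code, Nat.unpair_pair]
        rw [if_neg (by omega), if_pos (⟨trivial, by omega⟩ : True ∧ (2 * r' + 1) % 2 = 1)]
        have hdiv : (2 * r' + 1) / 2 = r' := by omega
        rw [hdiv, bin_code_ex_inv]
        simp only [GoodLoc]
        by_cases h1 : DLConcept.ex (.inv r') C ∈ T
        · simp only [h1, decide_true, Bool.not_true, Bool.false_or, true_implies]
          rw [any_map', List.any_eq_true]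
          constructor
          · rintro ⟨U, hU, hedge⟩
            simp only [Function.comp_apply, Bool.and_eq_true] at hedge
            rw [edgeB_code L U T r' (hS U hU) hT, bin_code, decide_eq_true_eq] at hedge
            exact ⟨U, hU, hedge.1, hedge.2⟩
          · rintro ⟨U, hU, he, hc⟩
            refine ⟨U, hU, ?_⟩
            simp only [Function.comp_apply, Bool.and_eq_true]
            rw [edgeB_code L U T r' (hS U hU) hT, bin_code, decide_eq_true_eq]
            exact ⟨he, hc⟩
        · simp [h1]
  | all R C =>
      obtain ⟨r'⟩ | ⟨r'⟩ := R
      · simp only [goodLocB, DLConcept.code, Role.code, Nat.unpair_pair]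
        rw [if_neg (by omega), if_neg (by omega),
          if_pos (⟨trivial, by omega⟩ : True ∧ 2 * r' % 2 = 0)]
        have hdiv : 2 * r' / 2 = r' := by omega
        rw [hdiv, bin_code_all_atom]
        simp only [GoodLoc]
        by_cases h1 : DLConcept.all (.atom r') C ∈ T
        · simp [h1]
        · simp only [h1, decide_false, Bool.false_or, not_false_eq_true, true_implies]
          rw [any_map', List.any_eq_true]
          constructor
          · rintro ⟨U, hU, hedge⟩
            simp only [Function.comp_apply, Bool.and_eq_true] at hedge
            rw [edgeB_code L T U r' hT (hS U hU)] at hedge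
            refine ⟨U, hU, hedge.1, ?_⟩
            have := hedge.2
            rw [Bool.not_eq_true', bin_code, decide_eq_false_iff_not] at this
            exact this
          · rintro ⟨U, hU, he, hc⟩
            refine ⟨U, hU, ?_⟩
            simp only [Function.comp_apply, Bool.and_eq_true]
            rw [edgeB_code L T U r' hT (hS U hU)]
            refine ⟨he, ?_⟩
            rw [Bool.not_eq_true', bin_code, decide_eq_false_iff_not]
            exact hc
      · simp only [goodLocB, DLConcept.code, Role.code, Nat.unpair_pair]
        rw [if_neg (by omega), if_neg (by omega), if_neg (by omega),
          if_pos (⟨trivial, by omega⟩ : True ∧ (2 * r' + 1) % 2 = 1)]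
        have hdiv : (2 * r' + 1) / 2 = r' := by omega
        rw [hdiv, bin_code_all_inv]
        simp only [GoodLoc]
        by_cases h1 : DLConcept.all (.inv r') C ∈ T
        · simp [h1]
        · simp only [h1, decide_false, Bool.false_or, not_false_eq_true, true_implies]
          rw [any_map', List.any_eq_true]
          constructor
          · rintro ⟨U, hU, hedge⟩
            simp only [Function.comp_apply, Bool.and_eq_true] at hedge
            rw [edgeB_code L U T r' (hS U hU) hT] at hedge
            refine ⟨U, hU, hedge.1, ?_⟩
            have := hedge.2
            rw [Bool.not_eq_true', bin_code, decide_eq_false_iff_not] at this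
            exact this
          · rintro ⟨U, hU, he, hc⟩
            refine ⟨U, hU, ?_⟩
            simp only [Function.comp_apply, Bool.and_eq_true]
            rw [edgeB_code L U T r' (hS U hU) hT]
            refine ⟨he, ?_⟩
            rw [Bool.not_eq_true', bin_code, decide_eq_false_iff_not]
            exact hc

theorem goodB_code (L T : List DLConcept) (S : List (List DLConcept))
    (hT : ∀ X ∈ T, X ∈ L) (hS : ∀ U ∈ S, ∀ X ∈ U, X ∈ L) :
    goodB (L.map DLConcept.code) (S.map (List.map DLConcept.code))
      (T.map DLConcept.code) = true ↔ Good L S T := by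
  rw [goodB, List.all_eq_true, Good]
  constructor
  · intro h X hX
    have := h _ (List.mem_map.2 ⟨X, hX, rfl⟩)
    rwa [goodLocB_code L T S hT hS] at this
  · intro h x hx
    rcases List.mem_map.1 hx with ⟨X, hX, rfl⟩
    rw [goodLocB_code L T S hT hS]
    exact h X hX

open Classical in
theorem stepB_code (L : List DLConcept) (S : List (List DLConcept))
    (hS : ∀ U ∈ S, ∀ X ∈ U, X ∈ L) :
    stepB (L.map DLConcept.code) (S.map (List.map DLConcept.code))
      = (step L S).map (List.map DLConcept.code) := by
  classical
  rw [stepB, step, List.filter_map]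
  congr 1
  apply List.filter_congr
  intro U hU
  rw [Function.comp_apply, Bool.eq_iff_iff, decide_eq_true_eq]
  exact goodB_code L U S (hS U hU) hS

open Classical in
theorem S0_code (L : List DLConcept) :
    (sublB (L.map DLConcept.code)).filter (hinB (L.map DLConcept.code))
      = (S0 L).map (List.map DLConcept.code) := by
  classical
  rw [sublB_code, List.filter_map, S0]
  congr 1
  apply List.filter_congr
  intro U hU
  rw [Function.comp_apply, Bool.eq_iff_iff, decide_eq_true_eq]
  exact hinB_code L U

theorem iter_mem_subset (L : List DLConcept) (k : ℕ) :
    ∀ U ∈ (step L)^[k] (S0 L), ∀ X ∈ U, X ∈ L := by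
  intro U hU
  have h0 : U ∈ S0 L := (iterate_sublist L (S0 L) k).mem hU
  rw [S0, List.mem_filter] at h0
  exact mem_sublC_subset L U h0.1

theorem iter_code (L : List DLConcept) : ∀ k : ℕ,
    (stepB (L.map DLConcept.code))^[k] ((S0 L).map (List.map DLConcept.code))
      = ((step L)^[k] (S0 L)).map (List.map DLConcept.code) := by
  intro k
  induction k with
  | zero => simp
  | succ k ih =>
      rw [Function.iterate_succ_apply', Function.iterate_succ_apply', ih,
        stepB_code L _ (iter_mem_subset L k)]

theorem satB_code (D : DLConcept) :
    satB D.code = true ↔ ∃ T ∈ FP (subc D), D ∈ T := by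
  have hlen : (((S0 (subc D)).map (List.map DLConcept.code)).length) = (S0 (subc D)).length :=
    List.length_map _
  rw [satB]
  simp only [clCode_code, S0_code, hlen, iter_code]
  rw [← FP, any_map', List.any_eq_true]
  constructor
  · rintro ⟨T, hT, hb⟩
    simp only [Function.comp_apply] at hb
    rw [bin_code, decide_eq_true_eq] at hb
    exact ⟨T, hT, hb⟩
  · rintro ⟨T, hT, hb⟩
    refine ⟨T, hT, ?_⟩
    simp only [Function.comp_apply]
    rw [bin_code, decide_eq_true_eq]
    exact hb

end SIDec

namespace SIDec

open Primrec

variable {α β σ : Type*} [Primcodable α] [Primcodable β] [Primcodable σ]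

theorem primrec_all {f : α → List β} {p : α → β → Bool} (hf : Primrec f) (hp : Primrec₂ p) :
    Primrec fun a => (f a).all (p a) :=
  (Primrec.list_foldr hf (Primrec.const true)
      (Primrec.to₂ ((Primrec.dom_bool₂ (· && ·)).comp
        (hp.comp Primrec.fst (Primrec.fst.comp Primrec.snd))
        (Primrec.snd.comp Primrec.snd)))).of_eq
    fun a => by dsimp; induction f a <;> simp [*]

theorem primrec_any {f : α → List β} {p : α → β → Bool} (hf : Primrec f) (hp : Primrec₂ p) :
    Primrec fun a => (f a).any (p a) :=
  (Primrec.list_foldr hf (Primrec.const false)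
      (Primrec.to₂ ((Primrec.dom_bool₂ (· || ·)).comp
        (hp.comp Primrec.fst (Primrec.fst.comp Primrec.snd))
        (Primrec.snd.comp Primrec.snd)))).of_eq
    fun a => by dsimp; induction f a <;> simp [*]

theorem primrec_filter {f : α → List β} {p : α → β → Bool} (hf : Primrec f) (hp : Primrec₂ p) :
    Primrec fun a => (f a).filter (p a) := by
  have hc : PrimrecPred fun q : α × β => p q.1 q.2 = true :=
    Primrec.primrecPred <| Primrec.of_eq (hp.comp Primrec.fst Primrec.snd) fun q => by
      cases h : p q.1 q.2 <;> simp [h]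
  have hg : Primrec₂ fun (a : α) (b : β) => if p a b = true then some b else none :=
    Primrec.to₂ (Primrec.ite hc
      (Primrec.option_some.comp Primrec.snd) (Primrec.const none))
  refine (Primrec.listFilterMap hf hg).of_eq fun a => ?_
  induction f a with
  | nil => rfl
  | cons b l ih =>
      by_cases h : p a b <;> simp [List.filterMap_cons, List.filter_cons, h, ih]

theorem bin_primrec : Primrec₂ bin :=
  Primrec.to₂ (primrec_any (Primrec.snd)
    (Primrec.to₂ (Primrec.beq.comp Primrec.snd (Primrec.fst.comp Primrec.fst))))

theorem getD_range_map (f : ℕ → List ℕ) (n m : ℕ) (h : m < n) :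
    (((List.range n).map f).getD m []) = f m := by
  rw [List.getD_eq_getElem?_getD]
  rw [List.getElem?_map]
  rw [List.getElem?_range h]
  rfl

theorem clCode_primrec : Primrec clCode := by
  have hg : Primrec fun q : Unit × List (List ℕ) =>
      (some (
        let ih := q.2
        let n := ih.length
        if n.unpair.1 = 3 then n :: ih.getD n.unpair.2 []
        else if n.unpair.1 = 4 ∨ n.unpair.1 = 5 then
          n :: (ih.getD n.unpair.2.unpair.1 [] ++ ih.getD n.unpair.2.unpair.2 [])
        else if n.unpair.1 = 6 ∨ n.unpair.1 = 7 then n :: ih.getD n.unpair.2.unpair.2 []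
        else if n.unpair.1 = 8 ∨ n.unpair.1 = 9 then
          n :: ih.getD n.unpair.2.unpair.2.unpair.2 []
        else [n]) : Option (List ℕ)) := by
    have hih : Primrec fun q : Unit × List (List ℕ) => q.2 := Primrec.snd
    have hn : Primrec fun q : Unit × List (List ℕ) => q.2.length :=
      Primrec.list_length.comp hih
    have hup : Primrec fun q : Unit × List (List ℕ) => q.2.length.unpair :=
      Primrec.unpair.comp hn
    have ht : Primrec fun q : Unit × List (List ℕ) => q.2.length.unpair.1 :=
      Primrec.fst.comp hup
    have hx : Primrec fun q : Unit × List (List ℕ) => q.2.length.unpair.2 :=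
      Primrec.snd.comp hup
    have hx1 : Primrec fun q : Unit × List (List ℕ) => q.2.length.unpair.2.unpair.1 :=
      Primrec.fst.comp (Primrec.unpair.comp hx)
    have hx2 : Primrec fun q : Unit × List (List ℕ) => q.2.length.unpair.2.unpair.2 :=
      Primrec.snd.comp (Primrec.unpair.comp hx)
    have hx22 : Primrec fun q : Unit × List (List ℕ) => q.2.length.unpair.2.unpair.2.unpair.2 :=
      Primrec.snd.comp (Primrec.unpair.comp hx2)
    have hget : ∀ {m : Unit × List (List ℕ) → ℕ}, Primrec m →
        Primrec fun q : Unit × List (List ℕ) => q.2.getD (m q) [] := fun hm =>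
      (Primrec.list_getD []).comp hih hm
    have heq : ∀ (k : ℕ), PrimrecPred fun q : Unit × List (List ℕ) =>
        q.2.length.unpair.1 = k := fun k => Primrec.eq.comp ht (Primrec.const k)
    refine Primrec.option_some.comp ?_
    refine Primrec.ite (heq 3) (Primrec.list_cons.comp hn (hget hx)) ?_
    refine Primrec.ite ((heq 4).or (heq 5))
      (Primrec.list_cons.comp hn (Primrec.list_append.comp (hget hx1) (hget hx2))) ?_
    refine Primrec.ite ((heq 6).or (heq 7)) (Primrec.list_cons.comp hn (hget hx2)) ?_
    refine Primrec.ite ((heq 8).or (heq 9)) (Primrec.list_cons.comp hn (hget hx22)) ?_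
    exact Primrec.list_cons.comp hn (Primrec.const [])
  have H := Primrec.nat_strong_rec (fun (_ : Unit) (n : ℕ) => clCode n) (Primrec.to₂ hg) ?_
  · exact H.comp (Primrec.const ()) Primrec.id
  · intro _ n
    simp only [List.length_map, List.length_range]
    rw [clCode]
    split_ifs with h1 h2 h3 h4
    · rw [getD_range_map _ _ _ (unpair_right_lt (by omega))]
    · rw [getD_range_map _ _ _ (lt_of_le_of_lt (Nat.unpair_left_le _)
          (unpair_right_lt (by omega))),
        getD_range_map _ _ _ (lt_of_le_of_lt (Nat.unpair_right_le _)
          (unpair_right_lt (by omega)))]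
    · rw [getD_range_map _ _ _ (lt_of_le_of_lt (Nat.unpair_right_le _)
          (unpair_right_lt (by omega)))]
    · rw [getD_range_map _ _ _ (lt_of_le_of_lt
          (le_trans (Nat.unpair_right_le _) (Nat.unpair_right_le _))
          (unpair_right_lt (by omega)))]
    · rfl

end SIDec

namespace SIDec

open Primrec

theorem hinLocB_primrec : Primrec₂ hinLocB := by
  have hT : Primrec fun q : List ℕ × ℕ => q.1 := Primrec.fst
  have hx : Primrec fun q : List ℕ × ℕ => q.2 := Primrec.snd
  have hup : Primrec fun q : List ℕ × ℕ => q.2.unpair := Primrec.unpair.comp hx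
  have ht : Primrec fun q : List ℕ × ℕ => q.2.unpair.1 := Primrec.fst.comp hup
  have hy : Primrec fun q : List ℕ × ℕ => q.2.unpair.2 := Primrec.snd.comp hup
  have hy1 : Primrec fun q : List ℕ × ℕ => q.2.unpair.2.unpair.1 :=
    Primrec.fst.comp (Primrec.unpair.comp hy)
  have hy2 : Primrec fun q : List ℕ × ℕ => q.2.unpair.2.unpair.2 :=
    Primrec.snd.comp (Primrec.unpair.comp hy)
  have hbx : Primrec fun q : List ℕ × ℕ => bin q.2 q.1 := bin_primrec.comp hx hT
  have hby : Primrec fun q : List ℕ × ℕ => bin q.2.unpair.2 q.1 := bin_primrec.comp hy hT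
  have hby1 : Primrec fun q : List ℕ × ℕ => bin q.2.unpair.2.unpair.1 q.1 :=
    bin_primrec.comp hy1 hT
  have hby2 : Primrec fun q : List ℕ × ℕ => bin q.2.unpair.2.unpair.2 q.1 :=
    bin_primrec.comp hy2 hT
  have heq : ∀ k : ℕ, PrimrecPred fun q : List ℕ × ℕ => q.2.unpair.1 = k := fun k =>
    Primrec.eq.comp ht (Primrec.const k)
  have hbig : Primrec fun q : List ℕ × ℕ =>
      if q.2.unpair.1 = 0 then bin q.2 q.1
      else if q.2.unpair.1 = 1 then !bin q.2 q.1
      else if q.2.unpair.1 = 3 then bin q.2 q.1 == !bin q.2.unpair.2 q.1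
      else if q.2.unpair.1 = 4 then
        bin q.2 q.1 == (bin q.2.unpair.2.unpair.1 q.1 && bin q.2.unpair.2.unpair.2 q.1)
      else if q.2.unpair.1 = 5 then
        bin q.2 q.1 == (bin q.2.unpair.2.unpair.1 q.1 || bin q.2.unpair.2.unpair.2 q.1)
      else true := by
    refine Primrec.ite (heq 0) hbx ?_
    refine Primrec.ite (heq 1) (Primrec.not.comp hbx) ?_
    refine Primrec.ite (heq 3) (Primrec.beq.comp hbx (Primrec.not.comp hby)) ?_
    refine Primrec.ite (heq 4)
      (Primrec.beq.comp hbx ((Primrec.dom_bool₂ (· && ·)).comp hby1 hby2)) ?_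
    refine Primrec.ite (heq 5)
      (Primrec.beq.comp hbx ((Primrec.dom_bool₂ (· || ·)).comp hby1 hby2)) ?_
    exact Primrec.const true
  exact hbig.of_eq fun q => rfl

theorem hinB_primrec : Primrec₂ hinB := by
  have hp1 : Primrec fun w : (List ℕ × List ℕ) × ℕ => bin w.2 w.1.1 :=
    bin_primrec.comp Primrec.snd (Primrec.fst.comp Primrec.fst)
  have h1 : Primrec fun q : List ℕ × List ℕ => q.2.all fun x => bin x q.1 :=
    primrec_all Primrec.snd hp1
  have hp2 : Primrec fun w : (List ℕ × List ℕ) × ℕ => hinLocB w.1.2 w.2 :=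
    hinLocB_primrec.comp (Primrec.snd.comp Primrec.fst) Primrec.snd
  have h2 : Primrec fun q : List ℕ × List ℕ => q.1.all fun x => hinLocB q.2 x :=
    primrec_all Primrec.fst hp2
  have hbig : Primrec fun q : List ℕ × List ℕ =>
      (q.2.all fun x => bin x q.1) && (q.1.all fun x => hinLocB q.2 x) :=
    (Primrec.dom_bool₂ (· && ·)).comp h1 h2
  exact hbig.of_eq fun q => rfl

theorem edgeLocB_primrec :
    Primrec fun z : (List ℕ × List ℕ × ℕ) × ℕ => edgeLocB z.1.1 z.1.2.1 z.1.2.2 z.2 := by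
  have hT : Primrec fun z : (List ℕ × List ℕ × ℕ) × ℕ => z.1.1 :=
    Primrec.fst.comp Primrec.fst
  have hT' : Primrec fun z : (List ℕ × List ℕ × ℕ) × ℕ => z.1.2.1 :=
    Primrec.fst.comp (Primrec.snd.comp Primrec.fst)
  have hr : Primrec fun z : (List ℕ × List ℕ × ℕ) × ℕ => z.1.2.2 :=
    Primrec.snd.comp (Primrec.snd.comp Primrec.fst)
  have hx : Primrec fun z : (List ℕ × List ℕ × ℕ) × ℕ => z.2 := Primrec.snd
  have hup : Primrec fun z : (List ℕ × List ℕ × ℕ) × ℕ => z.2.unpair :=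
    Primrec.unpair.comp hx
  have ht : Primrec fun z : (List ℕ × List ℕ × ℕ) × ℕ => z.2.unpair.1 :=
    Primrec.fst.comp hup
  have hx2 : Primrec fun z : (List ℕ × List ℕ × ℕ) × ℕ => z.2.unpair.2 :=
    Primrec.snd.comp hup
  have hrc : Primrec fun z : (List ℕ × List ℕ × ℕ) × ℕ => z.2.unpair.2.unpair.1 :=
    Primrec.fst.comp (Primrec.unpair.comp hx2)
  have hc : Primrec fun z : (List ℕ × List ℕ × ℕ) × ℕ => z.2.unpair.2.unpair.2 :=
    Primrec.snd.comp (Primrec.unpair.comp hx2)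
  have h2r : Primrec fun z : (List ℕ × List ℕ × ℕ) × ℕ => 2 * z.1.2.2 :=
    Primrec.nat_mul.comp (Primrec.const 2) hr
  have h2r1 : Primrec fun z : (List ℕ × List ℕ × ℕ) × ℕ => 2 * z.1.2.2 + 1 :=
    Primrec.succ.comp h2r
  have hbxT : Primrec fun z : (List ℕ × List ℕ × ℕ) × ℕ => bin z.2 z.1.1 :=
    bin_primrec.comp hx hT
  have hbxT' : Primrec fun z : (List ℕ × List ℕ × ℕ) × ℕ => bin z.2 z.1.2.1 :=
    bin_primrec.comp hx hT'
  have hbcT : Primrec fun z : (List ℕ × List ℕ × ℕ) × ℕ => bin z.2.unpair.2.unpair.2 z.1.1 :=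
    bin_primrec.comp hc hT
  have hbcT' : Primrec fun z : (List ℕ × List ℕ × ℕ) × ℕ => bin z.2.unpair.2.unpair.2 z.1.2.1 :=
    bin_primrec.comp hc hT'
  have hpar : Primrec fun z : (List ℕ × List ℕ × ℕ) × ℕ => !(z.1.2.2 % 2 == 0) :=
    Primrec.not.comp (Primrec.beq.comp
      (Primrec.nat_mod.comp hr (Primrec.const 2)) (Primrec.const 0))
  have hcond1 : PrimrecPred fun z : (List ℕ × List ℕ × ℕ) × ℕ =>
      z.2.unpair.1 = 6 ∧ z.2.unpair.2.unpair.1 = 2 * z.1.2.2 :=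
    PrimrecPred.and (Primrec.eq.comp ht (Primrec.const 6)) (Primrec.eq.comp hrc h2r)
  have hcond2 : PrimrecPred fun z : (List ℕ × List ℕ × ℕ) × ℕ =>
      z.2.unpair.1 = 6 ∧ z.2.unpair.2.unpair.1 = 2 * z.1.2.2 + 1 :=
    PrimrecPred.and (Primrec.eq.comp ht (Primrec.const 6)) (Primrec.eq.comp hrc h2r1)
  have hcond3 : PrimrecPred fun z : (List ℕ × List ℕ × ℕ) × ℕ =>
      z.2.unpair.1 = 7 ∧ z.2.unpair.2.unpair.1 = 2 * z.1.2.2 :=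
    PrimrecPred.and (Primrec.eq.comp ht (Primrec.const 7)) (Primrec.eq.comp hrc h2r)
  have hcond4 : PrimrecPred fun z : (List ℕ × List ℕ × ℕ) × ℕ =>
      z.2.unpair.1 = 7 ∧ z.2.unpair.2.unpair.1 = 2 * z.1.2.2 + 1 :=
    PrimrecPred.and (Primrec.eq.comp ht (Primrec.const 7)) (Primrec.eq.comp hrc h2r1)
  have hor : Primrec₂ (· || ·) := Primrec.dom_bool₂ _
  have hand : Primrec₂ (· && ·) := Primrec.dom_bool₂ _
  have hbig : Primrec fun z : (List ℕ × List ℕ × ℕ) × ℕ =>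
      if z.2.unpair.1 = 6 ∧ z.2.unpair.2.unpair.1 = 2 * z.1.2.2 then
        !bin z.2 z.1.1 || (bin z.2.unpair.2.unpair.2 z.1.2.1 &&
          (!(z.1.2.2 % 2 == 0) || bin z.2 z.1.2.1))
      else if z.2.unpair.1 = 6 ∧ z.2.unpair.2.unpair.1 = 2 * z.1.2.2 + 1 then
        !bin z.2 z.1.2.1 || (bin z.2.unpair.2.unpair.2 z.1.1 &&
          (!(z.1.2.2 % 2 == 0) || bin z.2 z.1.1))
      else if z.2.unpair.1 = 7 ∧ z.2.unpair.2.unpair.1 = 2 * z.1.2.2 then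
        bin z.2 z.1.1 || (!bin z.2.unpair.2.unpair.2 z.1.2.1 &&
          (!(z.1.2.2 % 2 == 0) || !bin z.2 z.1.2.1))
      else if z.2.unpair.1 = 7 ∧ z.2.unpair.2.unpair.1 = 2 * z.1.2.2 + 1 then
        bin z.2 z.1.2.1 || (!bin z.2.unpair.2.unpair.2 z.1.1 &&
          (!(z.1.2.2 % 2 == 0) || !bin z.2 z.1.1))
      else true := by
    refine Primrec.ite hcond1
      (hor.comp (Primrec.not.comp hbxT) (hand.comp hbcT' (hor.comp hpar hbxT'))) ?_
    refine Primrec.ite hcond2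
      (hor.comp (Primrec.not.comp hbxT') (hand.comp hbcT (hor.comp hpar hbxT))) ?_
    refine Primrec.ite hcond3
      (hor.comp hbxT (hand.comp (Primrec.not.comp hbcT')
        (hor.comp hpar (Primrec.not.comp hbxT')))) ?_
    refine Primrec.ite hcond4
      (hor.comp hbxT' (hand.comp (Primrec.not.comp hbcT)
        (hor.comp hpar (Primrec.not.comp hbxT)))) ?_
    exact Primrec.const true
  exact hbig.of_eq fun z => rfl

theorem edgeB_primrec :
    Primrec fun z : List ℕ × List ℕ × List ℕ × ℕ => edgeB z.1 z.2.1 z.2.2.1 z.2.2.2 := by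
  have harg : Primrec fun w : (List ℕ × List ℕ × List ℕ × ℕ) × ℕ =>
      ((w.1.2.1, w.1.2.2.1, w.1.2.2.2), w.2) :=
    Primrec.pair (Primrec.pair (Primrec.fst.comp (Primrec.snd.comp Primrec.fst))
      (Primrec.pair (Primrec.fst.comp (Primrec.snd.comp (Primrec.snd.comp Primrec.fst)))
        (Primrec.snd.comp (Primrec.snd.comp (Primrec.snd.comp Primrec.fst)))))
      Primrec.snd
  have hp : Primrec fun w : (List ℕ × List ℕ × List ℕ × ℕ) × ℕ =>
      edgeLocB w.1.2.1 w.1.2.2.1 w.1.2.2.2 w.2 :=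
    (edgeLocB_primrec.comp harg).of_eq fun w => rfl
  have hbig : Primrec fun z : List ℕ × List ℕ × List ℕ × ℕ =>
      z.1.all fun x => edgeLocB z.2.1 z.2.2.1 z.2.2.2 x :=
    primrec_all Primrec.fst hp
  exact hbig.of_eq fun z => rfl

theorem goodLocB_primrec :
    Primrec fun z : (List ℕ × List (List ℕ) × List ℕ) × ℕ =>
      goodLocB z.1.1 z.1.2.1 z.1.2.2 z.2 := by
  have hL : Primrec fun z : (List ℕ × List (List ℕ) × List ℕ) × ℕ => z.1.1 :=
    Primrec.fst.comp Primrec.fst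
  have hS : Primrec fun z : (List ℕ × List (List ℕ) × List ℕ) × ℕ => z.1.2.1 :=
    Primrec.fst.comp (Primrec.snd.comp Primrec.fst)
  have hT : Primrec fun z : (List ℕ × List (List ℕ) × List ℕ) × ℕ => z.1.2.2 :=
    Primrec.snd.comp (Primrec.snd.comp Primrec.fst)
  have hx : Primrec fun z : (List ℕ × List (List ℕ) × List ℕ) × ℕ => z.2 := Primrec.snd
  have hup : Primrec fun z : (List ℕ × List (List ℕ) × List ℕ) × ℕ => z.2.unpair :=
    Primrec.unpair.comp hx
  have ht : Primrec fun z : (List ℕ × List (List ℕ) × List ℕ) × ℕ => z.2.unpair.1 :=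
    Primrec.fst.comp hup
  have hx2 : Primrec fun z : (List ℕ × List (List ℕ) × List ℕ) × ℕ => z.2.unpair.2 :=
    Primrec.snd.comp hup
  have hrc : Primrec fun z : (List ℕ × List (List ℕ) × List ℕ) × ℕ =>
      z.2.unpair.2.unpair.1 := Primrec.fst.comp (Primrec.unpair.comp hx2)
  have hc : Primrec fun z : (List ℕ × List (List ℕ) × List ℕ) × ℕ =>
      z.2.unpair.2.unpair.2 := Primrec.snd.comp (Primrec.unpair.comp hx2)
  have hrc2 : Primrec fun z : (List ℕ × List (List ℕ) × List ℕ) × ℕ =>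
      z.2.unpair.2.unpair.1 / 2 := Primrec.nat_div.comp hrc (Primrec.const 2)
  have hbxT : Primrec fun z : (List ℕ × List (List ℕ) × List ℕ) × ℕ => bin z.2 z.1.2.2 :=
    bin_primrec.comp hx hT
  have hor : Primrec₂ (· || ·) := Primrec.dom_bool₂ _
  have hand : Primrec₂ (· && ·) := Primrec.dom_bool₂ _
  have harg1 : Primrec fun w : ((List ℕ × List (List ℕ) × List ℕ) × ℕ) × List ℕ =>
      (w.1.1.1, w.1.1.2.2, w.2, w.1.2.unpair.2.unpair.1 / 2) :=
    Primrec.pair (hL.comp Primrec.fst) (Primrec.pair (hT.comp Primrec.fst)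
      (Primrec.pair Primrec.snd (hrc2.comp Primrec.fst)))
  have harg2 : Primrec fun w : ((List ℕ × List (List ℕ) × List ℕ) × ℕ) × List ℕ =>
      (w.1.1.1, w.2, w.1.1.2.2, w.1.2.unpair.2.unpair.1 / 2) :=
    Primrec.pair (hL.comp Primrec.fst) (Primrec.pair Primrec.snd
      (Primrec.pair (hT.comp Primrec.fst) (hrc2.comp Primrec.fst)))
  have he1 : Primrec fun w : ((List ℕ × List (List ℕ) × List ℕ) × ℕ) × List ℕ =>
      edgeB w.1.1.1 w.1.1.2.2 w.2 (w.1.2.unpair.2.unpair.1 / 2) :=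
    (edgeB_primrec.comp harg1).of_eq fun w => rfl
  have he2 : Primrec fun w : ((List ℕ × List (List ℕ) × List ℕ) × ℕ) × List ℕ =>
      edgeB w.1.1.1 w.2 w.1.1.2.2 (w.1.2.unpair.2.unpair.1 / 2) :=
    (edgeB_primrec.comp harg2).of_eq fun w => rfl
  have hbc : Primrec fun w : ((List ℕ × List (List ℕ) × List ℕ) × ℕ) × List ℕ =>
      bin w.1.2.unpair.2.unpair.2 w.2 :=
    bin_primrec.comp (hc.comp Primrec.fst) Primrec.snd
  have hp1 : Primrec fun w : ((List ℕ × List (List ℕ) × List ℕ) × ℕ) × List ℕ =>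
      edgeB w.1.1.1 w.1.1.2.2 w.2 (w.1.2.unpair.2.unpair.1 / 2) &&
        bin w.1.2.unpair.2.unpair.2 w.2 := hand.comp he1 hbc
  have hp2 : Primrec fun w : ((List ℕ × List (List ℕ) × List ℕ) × ℕ) × List ℕ =>
      edgeB w.1.1.1 w.2 w.1.1.2.2 (w.1.2.unpair.2.unpair.1 / 2) &&
        bin w.1.2.unpair.2.unpair.2 w.2 := hand.comp he2 hbc
  have hp3 : Primrec fun w : ((List ℕ × List (List ℕ) × List ℕ) × ℕ) × List ℕ =>
      edgeB w.1.1.1 w.1.1.2.2 w.2 (w.1.2.unpair.2.unpair.1 / 2) &&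
        !bin w.1.2.unpair.2.unpair.2 w.2 := hand.comp he1 (Primrec.not.comp hbc)
  have hp4 : Primrec fun w : ((List ℕ × List (List ℕ) × List ℕ) × ℕ) × List ℕ =>
      edgeB w.1.1.1 w.2 w.1.1.2.2 (w.1.2.unpair.2.unpair.1 / 2) &&
        !bin w.1.2.unpair.2.unpair.2 w.2 := hand.comp he2 (Primrec.not.comp hbc)
  have hany1 : Primrec fun z : (List ℕ × List (List ℕ) × List ℕ) × ℕ =>
      z.1.2.1.any fun T' => edgeB z.1.1 z.1.2.2 T' (z.2.unpair.2.unpair.1 / 2) &&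
        bin z.2.unpair.2.unpair.2 T' := primrec_any hS hp1
  have hany2 : Primrec fun z : (List ℕ × List (List ℕ) × List ℕ) × ℕ =>
      z.1.2.1.any fun T' => edgeB z.1.1 T' z.1.2.2 (z.2.unpair.2.unpair.1 / 2) &&
        bin z.2.unpair.2.unpair.2 T' := primrec_any hS hp2
  have hany3 : Primrec fun z : (List ℕ × List (List ℕ) × List ℕ) × ℕ =>
      z.1.2.1.any fun T' => edgeB z.1.1 z.1.2.2 T' (z.2.unpair.2.unpair.1 / 2) &&
        !bin z.2.unpair.2.unpair.2 T' := primrec_any hS hp3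
  have hany4 : Primrec fun z : (List ℕ × List (List ℕ) × List ℕ) × ℕ =>
      z.1.2.1.any fun T' => edgeB z.1.1 T' z.1.2.2 (z.2.unpair.2.unpair.1 / 2) &&
        !bin z.2.unpair.2.unpair.2 T' := primrec_any hS hp4
  have hcond : ∀ (k m : ℕ), PrimrecPred fun z : (List ℕ × List (List ℕ) × List ℕ) × ℕ =>
      z.2.unpair.1 = k ∧ z.2.unpair.2.unpair.1 % 2 = m := fun k m =>
    PrimrecPred.and (Primrec.eq.comp ht (Primrec.const k))
      (Primrec.eq.comp (Primrec.nat_mod.comp hrc (Primrec.const 2)) (Primrec.const m))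
  have hbig : Primrec fun z : (List ℕ × List (List ℕ) × List ℕ) × ℕ =>
      if z.2.unpair.1 = 7 ∧ z.2.unpair.2.unpair.1 % 2 = 0 then
        !bin z.2 z.1.2.2 || z.1.2.1.any fun T' =>
          edgeB z.1.1 z.1.2.2 T' (z.2.unpair.2.unpair.1 / 2) && bin z.2.unpair.2.unpair.2 T'
      else if z.2.unpair.1 = 7 ∧ z.2.unpair.2.unpair.1 % 2 = 1 then
        !bin z.2 z.1.2.2 || z.1.2.1.any fun T' =>
          edgeB z.1.1 T' z.1.2.2 (z.2.unpair.2.unpair.1 / 2) && bin z.2.unpair.2.unpair.2 T'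
      else if z.2.unpair.1 = 6 ∧ z.2.unpair.2.unpair.1 % 2 = 0 then
        bin z.2 z.1.2.2 || z.1.2.1.any fun T' =>
          edgeB z.1.1 z.1.2.2 T' (z.2.unpair.2.unpair.1 / 2) && !bin z.2.unpair.2.unpair.2 T'
      else if z.2.unpair.1 = 6 ∧ z.2.unpair.2.unpair.1 % 2 = 1 then
        bin z.2 z.1.2.2 || z.1.2.1.any fun T' =>
          edgeB z.1.1 T' z.1.2.2 (z.2.unpair.2.unpair.1 / 2) && !bin z.2.unpair.2.unpair.2 T'
      else true := by
    refine Primrec.ite (hcond 7 0) (hor.comp (Primrec.not.comp hbxT) hany1) ?_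
    refine Primrec.ite (hcond 7 1) (hor.comp (Primrec.not.comp hbxT) hany2) ?_
    refine Primrec.ite (hcond 6 0) (hor.comp hbxT hany3) ?_
    refine Primrec.ite (hcond 6 1) (hor.comp hbxT hany4) ?_
    exact Primrec.const true
  exact hbig.of_eq fun z => rfl

theorem goodB_primrec :
    Primrec fun z : List ℕ × List (List ℕ) × List ℕ => goodB z.1 z.2.1 z.2.2 := by
  have harg : Primrec fun w : (List ℕ × List (List ℕ) × List ℕ) × ℕ =>
      ((w.1.1, w.1.2.1, w.1.2.2), w.2) :=
    Primrec.pair (Primrec.pair (Primrec.fst.comp Primrec.fst)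
      (Primrec.pair (Primrec.fst.comp (Primrec.snd.comp Primrec.fst))
        (Primrec.snd.comp (Primrec.snd.comp Primrec.fst)))) Primrec.snd
  have hp : Primrec fun w : (List ℕ × List (List ℕ) × List ℕ) × ℕ =>
      goodLocB w.1.1 w.1.2.1 w.1.2.2 w.2 :=
    (goodLocB_primrec.comp harg).of_eq fun w => rfl
  have hbig : Primrec fun z : List ℕ × List (List ℕ) × List ℕ =>
      z.1.all fun x => goodLocB z.1 z.2.1 z.2.2 x := primrec_all Primrec.fst hp
  exact hbig.of_eq fun z => rfl

theorem stepB_primrec : Primrec₂ stepB := by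
  have harg : Primrec fun w : (List ℕ × List (List ℕ)) × List ℕ =>
      (w.1.1, w.1.2, w.2) :=
    Primrec.pair (Primrec.fst.comp Primrec.fst)
      (Primrec.pair (Primrec.snd.comp Primrec.fst) Primrec.snd)
  have hp : Primrec fun w : (List ℕ × List (List ℕ)) × List ℕ => goodB w.1.1 w.1.2 w.2 :=
    (goodB_primrec.comp harg).of_eq fun w => rfl
  have hbig : Primrec fun q : List ℕ × List (List ℕ) =>
      q.2.filter fun T => goodB q.1 q.2 T := primrec_filter Primrec.snd hp
  exact hbig.of_eq fun q => rfl

theorem sublB_primrec : Primrec sublB := by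
  have hrec : Primrec fun w : List ℕ × (ℕ × List ℕ × List (List ℕ)) => w.2.2.2 :=
    Primrec.snd.comp (Primrec.snd.comp Primrec.snd)
  have hhd : Primrec fun w : List ℕ × (ℕ × List ℕ × List (List ℕ)) => w.2.1 :=
    Primrec.fst.comp Primrec.snd
  have hmap : Primrec fun w : List ℕ × (ℕ × List ℕ × List (List ℕ)) =>
      w.2.2.2.map (w.2.1 :: ·) := by
    have hp : Primrec fun v : (List ℕ × (ℕ × List ℕ × List (List ℕ))) × List ℕ =>
        v.1.2.1 :: v.2 :=
      Primrec.list_cons.comp (hhd.comp Primrec.fst) Primrec.snd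
    exact Primrec.list_map hrec hp
  have hh : Primrec fun w : List ℕ × (ℕ × List ℕ × List (List ℕ)) =>
      w.2.2.2 ++ w.2.2.2.map (w.2.1 :: ·) := Primrec.list_append.comp hrec hmap
  have h := Primrec.list_rec (f := @id (List ℕ)) (g := fun _ => [[]])
    (h := fun (l : List ℕ) (p : ℕ × List ℕ × List (List ℕ)) =>
      p.2.2 ++ p.2.2.map (p.1 :: ·)) Primrec.id (Primrec.const [[]]) hh
  refine h.of_eq fun l => ?_
  induction l with
  | nil => rfl
  | cons a l ih => simp only [id] at ih ⊢; rw [ih]; rfl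

theorem satB_primrec : Primrec satB := by
  have hL : Primrec fun n : ℕ => clCode n := clCode_primrec
  have hpf : Primrec fun w : ℕ × List ℕ => hinB (clCode w.1) w.2 :=
    hinB_primrec.comp (hL.comp Primrec.fst) Primrec.snd
  have hS : Primrec fun n : ℕ => (sublB (clCode n)).filter fun T => hinB (clCode n) T :=
    primrec_filter (sublB_primrec.comp hL) hpf
  have hstep : Primrec fun w : ℕ × List (List ℕ) => stepB (clCode w.1) w.2 :=
    stepB_primrec.comp (hL.comp Primrec.fst) Primrec.snd
  have hiter : Primrec fun n : ℕ =>
      (stepB (clCode n))^[((sublB (clCode n)).filter fun T => hinB (clCode n) T).length]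
        ((sublB (clCode n)).filter fun T => hinB (clCode n) T) :=
    Primrec.nat_iterate (Primrec.list_length.comp hS) hS hstep
  have hbinp : Primrec fun w : ℕ × List ℕ => bin w.1 w.2 := bin_primrec
  have hbig : Primrec fun n : ℕ =>
      ((stepB (clCode n))^[((sublB (clCode n)).filter fun T => hinB (clCode n) T).length]
        ((sublB (clCode n)).filter fun T => hinB (clCode n) T)).any fun T => bin n T :=
    primrec_any hiter hbinp
  exact hbig.of_eq fun n => rfl

theorem subB_primrec : Primrec subB := by
  have harg : Primrec fun n : ℕ =>
      Nat.pair 4 (Nat.pair n.unpair.1 (Nat.pair 3 n.unpair.2)) :=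
    Primrec₂.natPair.comp (Primrec.const 4)
      (Primrec₂.natPair.comp (Primrec.fst.comp Primrec.unpair)
        (Primrec₂.natPair.comp (Primrec.const 3) (Primrec.snd.comp Primrec.unpair)))
  exact Primrec.not.comp (satB_primrec.comp harg)

end SIDec
/-- **Theorem 4: decidability of SI.** Over the fixed, effectively
encoded signature, there is a computable function deciding satisfiability of
SI-concepts, and hence also one deciding subsumption of SI-concepts. -/
theorem si_decidable :
    (∃ f : ℕ → Bool, Computable f ∧
      ∀ D : DLConcept, D.IsSI →
        (f D.code = true ↔ SatisfiableSI evenRp D)) ∧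
    (∃ g : ℕ → Bool, Computable g ∧
      ∀ C D : DLConcept, C.IsSI → D.IsSI →
        (g (Nat.pair C.code D.code) = true ↔ SubsumesSI evenRp C D)) := by
  constructor
  · refine ⟨SIDec.satB, SIDec.satB_primrec.to_comp, ?_⟩
    intro D hSI
    exact (SIDec.satB_code D).trans (SIDec.satC_iff D hSI)
  · refine ⟨SIDec.subB, SIDec.subB_primrec.to_comp, ?_⟩
    intro C D hC hD
    have hSI : (DLConcept.and C (DLConcept.neg D)).IsSI := ⟨hC, hD⟩
    have hcode : Nat.pair 4 (Nat.pair (Nat.pair C.code D.code).unpair.1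
        (Nat.pair 3 (Nat.pair C.code D.code).unpair.2))
        = (DLConcept.and C (DLConcept.neg D)).code := by
      simp only [Nat.unpair_pair]
      rfl
    have key : SIDec.satB ((DLConcept.and C (DLConcept.neg D)).code) = true ↔
        SatisfiableSI evenRp (DLConcept.and C (DLConcept.neg D)) :=
      (SIDec.satB_code _).trans (SIDec.satC_iff _ hSI)
    rw [SIDec.subB, hcode, Bool.not_eq_true', SIDec.subsumesSI_iff C D, ← key]
    simp
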